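/- arXiv:2007.12552 — 5 statements merged into one kernel-verified Lean document; each statement's English description precedes it below -/
import Mathlib

section
/- Let q : B_a → ℝ (where B_a ⊂ ℝ³ is the open ball of radius a centered at the origin) be radially symmetric, i.e. there exists a trace function q̄ : [0,a) → ℝ with q(x) = q̄(|x|). Then q is of class Cⁿ on B_a if and only if q̄ is Cⁿ on [0,a) (differentiable up to the boundary at 0) and all odd-order derivatives of q̄ of order at most n vanish at zero. -/
/-!
If `q` is `Cⁿ`, then `r ↦ q(r u)` for a unit vector `u` is a `Cⁿ` function on `(-a, a)`
which is even and equals `q̄(|r|)`, so its odd derivatives vanish at `0`.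

Conversely, split `q̄` into its Taylor polynomial of order `n` at `0` and a remainder `R` that
is flat of order `n` at `0`. Only even powers of `r` occur in the polynomial, and `‖x‖ ^ (2t)`
is a polynomial in `x`. For the remainder one shows by induction on `m` that
`x ↦ (R(‖x‖) / ‖x‖ ^ e) • Φ(x)` is `Cᵐ` whenever `Φ` is smooth and positively homogeneous of
degree `d` and `m ≤ n`, `m + e ≤ n + d`: away from `0` this is the chain rule, whose derivative
consists of three terms of the same shape, while at `0` flatness makes the function `o(‖x‖)`.
-/

open Set Filter Asymptotics Metric Topology
open scoped ContDiff

def IsFlatWithin (q : ℕ) (S : ℝ → ℝ) (s : Set ℝ) (x₀ : ℝ) : Prop :=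
  ContDiffOn ℝ q S s ∧ ∀ j ≤ q, iteratedDerivWithin j S s x₀ = 0

namespace IsFlatWithin

variable {q : ℕ} {S T : ℝ → ℝ} {s : Set ℝ} {x₀ : ℝ}

theorem apply_eq_zero (h : IsFlatWithin q S s x₀) : S x₀ = 0 := by
  simpa using h.2 0 (Nat.zero_le q)

theorem congr (h : IsFlatWithin q S s x₀) (hST : EqOn T S s) (hx₀ : x₀ ∈ s) :
    IsFlatWithin q T s x₀ :=
  ⟨h.1.congr hST, fun j hj => (iteratedDerivWithin_congr hST hx₀).trans (h.2 j hj)⟩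

theorem isLittleO (h : IsFlatWithin q S s x₀) (hs : Convex ℝ s) (hx₀ : x₀ ∈ s) :
    S =o[𝓝[s] x₀] fun r => (r - x₀) ^ q := by
  have hT : taylorWithinEval S q s x₀ = 0 := by
    ext r
    rw [taylor_within_apply]
    exact Finset.sum_eq_zero fun k hk => by
      rw [h.2 k (Nat.lt_succ_iff.mp (Finset.mem_range.mp hk)), smul_zero]
  simpa [hT] using taylor_isLittleO hs hx₀ h.1

end IsFlatWithin

theorem isFlatWithin_succ_iff {q : ℕ} {S : ℝ → ℝ} {s : Set ℝ} {x₀ : ℝ}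
    (hs : UniqueDiffOn ℝ s) :
    IsFlatWithin (q + 1) S s x₀ ↔
      DifferentiableOn ℝ S s ∧ S x₀ = 0 ∧ IsFlatWithin q (derivWithin S s) s x₀ := by
  have hderiv : ∀ j, iteratedDerivWithin (j + 1) S s x₀ =
      iteratedDerivWithin j (derivWithin S s) s x₀ := fun j => by
    rw [iteratedDerivWithin_succ']
  simp only [IsFlatWithin, Nat.cast_add, Nat.cast_one, contDiffOn_succ_iff_derivWithin hs]
  constructor
  · rintro ⟨⟨hd, -, hc⟩, hz⟩
    exact ⟨hd, by simpa using hz 0 (Nat.zero_le _), hc,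
      fun j hj => (hderiv j).symm.trans (hz (j + 1) (by omega))⟩
  · rintro ⟨hd, h0, hc, hz⟩
    refine ⟨⟨hd, by simp, hc⟩, fun j hj => ?_⟩
    rcases j with _ | j
    · simpa using h0
    · exact (hderiv j).trans (hz j (by omega))

theorem isFlatWithin_sub_taylorWithinEval {n : ℕ} {f : ℝ → ℝ} {s : Set ℝ} {x₀ : ℝ}
    (hs : UniqueDiffOn ℝ s) (hx₀ : x₀ ∈ s) (hf : ContDiffOn ℝ n f s) :
    IsFlatWithin n (fun r => f r - taylorWithinEval f n s x₀ r) s x₀ := by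
  induction n generalizing f with
  | zero =>
    refine ⟨(hf.sub (contDiffOn_const (c := f x₀))).congr fun r _ => by simp, fun j hj => ?_⟩
    simp [Nat.le_zero.mp hj]
  | succ n ih =>
    have hT : ∀ r, HasDerivAt (taylorWithinEval f (n + 1) s x₀)
        (taylorWithinEval (derivWithin f s) n s x₀ r) r :=
      fun r => hasDerivAt_taylorWithinEval_succ f n
    have hfd : DifferentiableOn ℝ f s := hf.differentiableOn (by simp)
    refine (isFlatWithin_succ_iff hs).mpr
      ⟨hfd.sub fun r _ => (hT r).differentiableAt.differentiableWithinAt, by simp,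
        (ih (hf.derivWithin hs (by simp))).congr (fun r hr => ?_) hx₀⟩
    rw [derivWithin_fun_sub (hfd r hr) (hT r).differentiableAt.differentiableWithinAt,
      (hT r).hasDerivWithinAt.derivWithin (hs r hr)]

theorem isLittleO_div_pow_mul_pow {S : ℝ → ℝ} {q e d k : ℕ} (hS : S =o[𝓝[>] 0] (· ^ q))
    (h : e + k ≤ q + d) : (fun r => S r / r ^ e * r ^ d) =o[𝓝[>] 0] (· ^ k) := by
  refine isLittleO_iff.mpr fun c hc => ?_
  filter_upwards [isLittleO_iff.mp hS hc, Ioo_mem_nhdsGT one_pos] with r hSr ⟨hr0, hr1⟩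
  have hsplit : r ^ q * r ^ d = r ^ k * r ^ (q + d - e - k) * r ^ e := by
    rw [← pow_add, ← pow_add, ← pow_add]; congr 1; omega
  rw [norm_pow, Real.norm_of_nonneg hr0.le] at hSr ⊢
  calc ‖S r / r ^ e * r ^ d‖ = ‖S r‖ * r ^ d / r ^ e := by
        rw [norm_mul, norm_div, norm_pow, norm_pow, Real.norm_of_nonneg hr0.le]; ring
    _ ≤ c * r ^ q * r ^ d / r ^ e := by gcongr
    _ = c * r ^ k * r ^ (q + d - e - k) := by
        rw [mul_assoc c, hsplit]; field_simp
    _ ≤ c * r ^ k := mul_le_of_le_one_right (by positivity) (pow_le_one₀ hr0.le hr1.le)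

section Homogeneous

variable {E F : Type*} [NormedAddCommGroup E] [NormedSpace ℝ E]
  [NormedAddCommGroup F] [NormedSpace ℝ F]

def IsPosHomogeneous (d : ℕ) (Φ : E → F) : Prop :=
  ∀ t : ℝ, 0 < t → ∀ x, Φ (t • x) = t ^ d • Φ x

namespace IsPosHomogeneous

variable {d : ℕ} {Φ : E → F}

theorem isBigO_norm_pow (hΦ : IsPosHomogeneous d Φ) (hc : ContinuousAt Φ 0) :
    Φ =O[𝓝[≠] 0] fun x => ‖x‖ ^ d := by
  obtain ⟨δ, hδ, hball⟩ := Metric.continuousAt_iff.mp hc 1 one_pos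
  refine IsBigO.of_bound ((2 / δ) ^ d * (‖Φ 0‖ + 1))
    (eventually_nhdsWithin_of_forall fun x hx => ?_)
  have hx : 0 < ‖x‖ := norm_pos_iff.mpr hx
  -- rescale `x` to norm `δ / 2`, where continuity at `0` bounds `Φ`
  set t := δ / (2 * ‖x‖)
  have ht : 0 < t := by positivity
  have hty : ‖t • x‖ < δ := by
    rw [norm_smul, Real.norm_of_nonneg ht.le, show t * ‖x‖ = δ / 2 by simp only [t]; field_simp]
    linarith
  have hbound : ‖Φ (t • x)‖ ≤ ‖Φ 0‖ + 1 := by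
    have := hball (x := t • x) (by simpa using hty)
    rw [dist_eq_norm] at this
    linarith [norm_le_norm_add_norm_sub' (Φ (t • x)) (Φ 0)]
  have hx_eq : Φ x = t⁻¹ ^ d • Φ (t • x) := by
    rw [← hΦ _ (inv_pos.mpr ht), smul_smul, inv_mul_cancel₀ ht.ne', one_smul]
  rw [hx_eq, norm_smul, norm_pow, Real.norm_of_nonneg (inv_pos.mpr ht).le, norm_pow, norm_norm]
  calc t⁻¹ ^ d * ‖Φ (t • x)‖ ≤ t⁻¹ ^ d * (‖Φ 0‖ + 1) := by gcongr
    _ = (2 / δ) ^ d * (‖Φ 0‖ + 1) * ‖x‖ ^ d := by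
        rw [show t⁻¹ = 2 / δ * ‖x‖ by simp only [t, inv_div]; ring]; ring

theorem apply_eq_apply_zero (hΦ : IsPosHomogeneous 0 Φ) (hc : ContinuousAt Φ 0) (x : E) :
    Φ x = Φ 0 := by
  have hlim : Tendsto (fun t : ℝ => Φ (t • x)) (𝓝[>] 0) (𝓝 (Φ 0)) := by
    have : Tendsto (fun t : ℝ => t • x) (𝓝[>] 0) (𝓝 0) := by
      simpa using ((tendsto_id (x := 𝓝 (0 : ℝ))).smul_const x).mono_left nhdsWithin_le_nhds
    exact hc.tendsto.comp this
  refine tendsto_nhds_unique ?_ hlim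
  exact (tendsto_const_nhds (x := Φ x)).congr' (eventually_nhdsWithin_of_forall fun t ht => by
    simp [hΦ t ht x])

theorem fderiv (hΦ : IsPosHomogeneous d Φ) (hd : Differentiable ℝ Φ) :
    IsPosHomogeneous (d - 1) (fderiv ℝ Φ) := by
  rcases d with _ | d
  · have hconst : Φ = fun _ => Φ 0 := funext (hΦ.apply_eq_apply_zero hd.continuous.continuousAt)
    intro t _ x
    rw [hconst]; simp
  intro t ht x
  have hcomp : HasFDerivAt (fun y => Φ (t • y)) (t • fderiv ℝ Φ (t • x)) x := by
    convert (hd (t • x)).hasFDerivAt.comp x ((hasFDerivAt_id x).const_smul t) using 1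
    · rfl
    · rw [ContinuousLinearMap.comp_smul, ContinuousLinearMap.comp_id]
  have hscaled : HasFDerivAt (fun y => Φ (t • y)) (t ^ (d + 1) • fderiv ℝ Φ x) x := by
    convert (hd x).hasFDerivAt.const_smul (t ^ (d + 1)) using 1
    exact funext (hΦ t ht)
  have := hcomp.unique hscaled
  rw [pow_succ', mul_smul] at this
  simpa using smul_right_injective _ ht.ne' this

end IsPosHomogeneous

end Homogeneous

section Radial

variable {E F : Type*} [NormedAddCommGroup E] [NormedAddCommGroup F] [NormedSpace ℝ F]

noncomputable def radialTerm (S : ℝ → ℝ) (e : ℕ) (Φ : E → F) (x : E) : F :=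
  (S ‖x‖ / ‖x‖ ^ e) • Φ x

variable {a : ℝ} {S : ℝ → ℝ} {q e d : ℕ} {Φ : E → F}

theorem radialTerm_zero (hS : S 0 = 0) : radialTerm S e Φ 0 = 0 := by
  simp [radialTerm, hS]

theorem isLittleO_radialTerm [NormedSpace ℝ E] (ha : 0 < a) (hS : IsFlatWithin q S (Ico 0 a) 0)
    (hΦ : IsPosHomogeneous d Φ) (hc : ContinuousAt Φ 0) {k : ℕ} (h : e + k ≤ q + d) :
    radialTerm S e Φ =o[𝓝 0] fun x => ‖x‖ ^ k := by
  have hS' : S =o[𝓝[>] 0] (· ^ q) := by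
    have := hS.isLittleO (convex_Ico 0 a) ⟨le_rfl, ha⟩
    rw [nhdsWithin_Ico_eq_nhdsGE ha] at this
    simpa using this.mono (nhdsWithin_mono _ Ioi_subset_Ici_self)
  have hrate := (isLittleO_div_pow_mul_pow hS' h).comp_tendsto (tendsto_norm_nhdsNE_zero (E := E))
  have hbig : radialTerm S e Φ =O[𝓝[≠] 0] fun x => S ‖x‖ / ‖x‖ ^ e * ‖x‖ ^ d :=
    (isBigO_refl (fun x : E => S ‖x‖ / ‖x‖ ^ e) _).smul (hΦ.isBigO_norm_pow hc)
  rw [← nhdsNE_sup_pure]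
  exact (hbig.trans_isLittleO hrate).sup (isLittleO_pure.mpr (radialTerm_zero hS.apply_eq_zero))

theorem continuousAt_radialTerm {x : E} (hx : x ≠ 0) (hxa : ‖x‖ < a)
    (hS : ContinuousOn S (Ico 0 a)) (hΦ : ContinuousAt Φ x) :
    ContinuousAt (radialTerm S e Φ) x := by
  have hmem : Ico 0 a ∈ 𝓝 ‖x‖ := Ico_mem_nhds (norm_pos_iff.mpr hx) hxa
  exact (((hS.continuousAt hmem).comp continuous_norm.continuousAt).div
    (continuous_norm.pow e).continuousAt (pow_ne_zero e (norm_ne_zero_iff.mpr hx))).smul hΦ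

theorem continuousOn_radialTerm [NormedSpace ℝ E] (ha : 0 < a) (hS : IsFlatWithin q S (Ico 0 a) 0)
    (hΦ : Continuous Φ) (hhom : IsPosHomogeneous d Φ) (he : e ≤ q + d) :
    ContinuousOn (radialTerm S e Φ) (ball 0 a) := by
  refine fun x hx => ContinuousAt.continuousWithinAt ?_
  rcases eq_or_ne x 0 with rfl | hx0
  · have := isLittleO_radialTerm ha hS hhom hΦ.continuousAt (k := 0) (by omega)
    simpa [ContinuousAt, radialTerm_zero hS.apply_eq_zero] using this
  · exact continuousAt_radialTerm hx0 (mem_ball_zero_iff.mp hx) hS.1.continuousOn hΦ.continuousAt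

end Radial

theorem hasFDerivAt_norm {E : Type*} [NormedAddCommGroup E] [InnerProductSpace ℝ E] {x : E}
    (hx : x ≠ 0) : HasFDerivAt (‖·‖) (‖x‖⁻¹ • innerSL ℝ x) x := by
  have h := (hasStrictFDerivAt_norm_sq x).hasFDerivAt.sqrt (by positivity)
  simp only [Real.sqrt_sq (norm_nonneg _)] at h
  refine h.congr_fderiv ?_
  ext v
  simp only [smul_apply, innerSL_apply_apply, nsmul_eq_mul, smul_eq_mul, Nat.cast_ofNat]
  field_simp

section RadialInner

universe u

variable {E : Type u} [NormedAddCommGroup E] [InnerProductSpace ℝ E]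

theorem IsPosHomogeneous.innerSL_smulRight {F : Type*} [NormedAddCommGroup F] [NormedSpace ℝ F]
    {d : ℕ} {Φ : E → F} (hΦ : IsPosHomogeneous d Φ) :
    IsPosHomogeneous (d + 1) fun x => (innerSL ℝ x).smulRight (Φ x) := by
  intro t ht x
  ext v
  simp only [ContinuousLinearMap.smulRight_apply, innerSL_apply_apply, inner_smul_left, hΦ t ht x,
    smul_apply, smul_smul, pow_succ, RCLike.conj_to_real]
  ring_nf

theorem hasFDerivAt_radialTerm {F : Type*} [NormedAddCommGroup F] [NormedSpace ℝ F]
    {S : ℝ → ℝ} {e : ℕ} {Φ : E → F} {x : E} (hx : x ≠ 0) {S₁ : ℝ → ℝ} {Φ₁ : E → E →L[ℝ] F}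
    (hS : HasDerivAt S (S₁ ‖x‖) ‖x‖) (hΦ : HasFDerivAt Φ (Φ₁ x) x) :
    HasFDerivAt (radialTerm S e Φ)
      (radialTerm S₁ (e + 1) (fun y => (innerSL ℝ y).smulRight (Φ y)) x
        - (e : ℝ) • radialTerm S (e + 2) (fun y => (innerSL ℝ y).smulRight (Φ y)) x
        + radialTerm S e Φ₁ x) x := by
  have hg : HasDerivAt (fun r => S r / r ^ e)
      ((S₁ ‖x‖ * ‖x‖ ^ e - S ‖x‖ * (e * ‖x‖ ^ (e - 1))) / (‖x‖ ^ e) ^ 2) ‖x‖ :=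
    hS.div (hasDerivAt_pow e ‖x‖) (pow_ne_zero e (norm_ne_zero_iff.mpr hx))
  refine ((hg.comp_hasFDerivAt x (hasFDerivAt_norm hx)).fun_smul hΦ).congr_fderiv ?_
  ext v
  simp only [radialTerm, add_apply, sub_apply, smul_apply,
    ContinuousLinearMap.smulRight_apply, innerSL_apply_apply, smul_smul, Function.comp_apply]
  match_scalars
  · ring
  · rcases e with _ | e
    · simp [field]
    · simp only [Nat.add_sub_cancel, smul_eq_mul]; field_simp; ring

/-- `F` is quantified after the colon because the induction passes from `F` to `E →L[ℝ] F`. -/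
theorem contDiffOn_radialTerm {a : ℝ} (ha : 0 < a) {m : ℕ} :
    ∀ {q e d : ℕ} {S : ℝ → ℝ} {F : Type u} [NormedAddCommGroup F] [NormedSpace ℝ F] {Φ : E → F},
      IsFlatWithin q S (Ico 0 a) 0 → ContDiff ℝ ∞ Φ → IsPosHomogeneous d Φ → m ≤ q →
      m + e ≤ q + d → ContDiffOn ℝ m (radialTerm S e Φ) (ball 0 a) := by
  induction m with
  | zero =>
    intro q e d S F _ _ Φ hS hΦ hhom _ he
    exact contDiffOn_zero.mpr (continuousOn_radialTerm ha hS hΦ.continuous hhom (by omega))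
  | succ m ih =>
    intro q e d S F _ _ Φ hS hΦ hhom hm he
    obtain ⟨q, rfl⟩ : ∃ q', q = q' + 1 := ⟨q - 1, by omega⟩
    obtain ⟨hSd, hS0, hS₁⟩ := (isFlatWithin_succ_iff (uniqueDiffOn_Ico 0 a)).mp hS
    set S₁ := derivWithin S (Ico 0 a)
    set Ψ : E → E →L[ℝ] F := fun y => (innerSL ℝ y).smulRight (Φ y)
    have hΨ : ContDiff ℝ ∞ Ψ := (innerSL ℝ).contDiff.smulRight hΦ
    have hΦ' := contDiff_infty_iff_fderiv.mp hΦ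
    set D : E → E →L[ℝ] F := fun x =>
      radialTerm S₁ (e + 1) Ψ x - (e : ℝ) • radialTerm S (e + 2) Ψ x + radialTerm S e (fderiv ℝ Φ) x
    have hD : ContDiffOn ℝ m D (ball 0 a) :=
      ((ih hS₁ hΨ hhom.innerSL_smulRight (by omega) (by omega)).sub
        ((ih hS hΨ hhom.innerSL_smulRight (by omega) (by omega)).const_smul _)).add
        (ih hS hΦ'.2 (hhom.fderiv hΦ'.1) (by omega) (by omega))
    have hderiv : ∀ x ∈ ball 0 a, HasFDerivAt (radialTerm S e Φ) (D x) x := by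
      intro x hx
      rcases eq_or_ne x 0 with rfl | hx0
      · have hD0 : D 0 = 0 := by simp [D, Ψ, radialTerm, hS0]
        have := isLittleO_radialTerm ha hS hhom hΦ.continuous.continuousAt (e := e) (k := 1)
          (by omega)
        rw [hD0, hasFDerivAt_iff_isLittleO_nhds_zero, ← isLittleO_norm_right]
        simpa [radialTerm_zero hS0] using this
      · have hmem : Ico 0 a ∈ 𝓝 ‖x‖ := Ico_mem_nhds (norm_pos_iff.mpr hx0) (mem_ball_zero_iff.mp hx)
        exact hasFDerivAt_radialTerm hx0
          ((hSd ‖x‖ (mem_of_mem_nhds hmem)).hasDerivWithinAt.hasDerivAt hmem)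
          (hΦ'.1 x).hasFDerivAt
    rw [Nat.cast_succ, contDiffOn_succ_iff_fderiv_of_isOpen isOpen_ball]
    exact ⟨fun x hx => (hderiv x hx).differentiableAt.differentiableWithinAt, by simp,
      hD.congr fun x hx => (hderiv x hx).fderiv⟩

theorem IsFlatWithin.contDiffOn_comp_norm {a : ℝ} (ha : 0 < a) {n : ℕ} {S : ℝ → ℝ}
    (hS : IsFlatWithin n S (Ico 0 a) 0) : ContDiffOn ℝ n (fun x : E => S ‖x‖) (ball 0 a) := by
  -- `ULift` puts the values in the universe of `E`, as `contDiffOn_radialTerm` requires.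
  have h := contDiffOn_radialTerm ha (e := 0) (d := 0) (Φ := fun _ : E => ULift.up.{u} (1 : ℝ))
    hS contDiff_const (fun t _ x => by simp) le_rfl (by omega)
  exact (ContinuousLinearEquiv.ulift.contDiff.comp_contDiffOn h).congr fun x _ => by
    simp [radialTerm, ContinuousLinearEquiv.ulift]

theorem contDiff_norm_pow_of_even {k : ℕ} (hk : Even k) {n : WithTop ℕ∞} :
    ContDiff ℝ n fun x : E => ‖x‖ ^ k := by
  obtain ⟨t, rfl⟩ := hk
  simpa [← two_mul, pow_mul] using (contDiff_norm_sq ℝ (E := E) (n := n)).pow t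

theorem contDiff_taylorWithinEval_norm {F : Type*} [NormedAddCommGroup F] [NormedSpace ℝ F]
    {f : ℝ → F} {n : ℕ} {s : Set ℝ} (hodd : ∀ k ≤ n, Odd k → iteratedDerivWithin k f s 0 = 0)
    {m : WithTop ℕ∞} : ContDiff ℝ m fun x : E => taylorWithinEval f n s 0 ‖x‖ := by
  simp_rw [taylor_within_apply, sub_zero]
  refine ContDiff.sum fun k hk => ?_
  rcases Nat.even_or_odd k with he | ho
  · exact (contDiff_const.mul (contDiff_norm_pow_of_even he)).smul contDiff_const
  · simp [hodd k (Nat.lt_succ_iff.mp (Finset.mem_range.mp hk)) ho, contDiff_const]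

end RadialInner

theorem Function.Even.iteratedDeriv_eq_zero {F : Type*} [NormedAddCommGroup F]
    [NormedSpace ℝ F] {f : ℝ → F} (hf : Function.Even f) {k : ℕ} (hk : Odd k) :
    iteratedDeriv k f 0 = 0 := by
  have h := iteratedDeriv_comp_neg k f 0
  rw [show (fun x => f (-x)) = f from funext hf, neg_zero, hk.neg_one_pow, neg_one_smul] at h
  have h2 : (2 : ℝ) • iteratedDeriv k f 0 = 0 := by
    rw [two_smul]; nth_rewrite 1 [h]; exact neg_add_cancel _
  exact (smul_eq_zero.mp h2).resolve_left two_ne_zero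

theorem contDiffOn_Ico_of_comp_abs {a : ℝ} {n : WithTop ℕ∞} {f : ℝ → ℝ}
    (h : ContDiffOn ℝ n (fun r => f |r|) (Ioo (-a) a)) : ContDiffOn ℝ n f (Ico 0 a) :=
  (h.mono fun r hr => ⟨by linarith [hr.1, hr.2], hr.2⟩).congr fun r hr => by
    simp [abs_of_nonneg hr.1]

theorem iteratedDerivWithin_Ico_eq_zero_of_comp_abs {a : ℝ} (ha : 0 < a) {n k : ℕ} {f : ℝ → ℝ}
    (h : ContDiffOn ℝ n (fun r => f |r|) (Ioo (-a) a)) (hk : k ≤ n) (hodd : Odd k) :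
    iteratedDerivWithin k f (Ico 0 a) 0 = 0 := by
  have h0 : (0 : ℝ) ∈ Ico 0 a := ⟨le_rfl, ha⟩
  have hcd : ContDiffAt ℝ k (fun r => f |r|) 0 :=
    (h.of_le (by exact_mod_cast hk)).contDiffAt (Ioo_mem_nhds (by linarith) ha)
  have heq : EqOn f (fun r => f |r|) (Ico 0 a) := fun r hr => by simp [abs_of_nonneg hr.1]
  rw [iteratedDerivWithin_congr heq h0,
    iteratedDerivWithin_eq_iteratedDeriv (uniqueDiffOn_Ico 0 a) hcd h0]
  exact Function.Even.iteratedDeriv_eq_zero (fun r => by simp) hodd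

theorem contDiffOn_comp_abs_of_radial {E : Type*} [NormedAddCommGroup E] [NormedSpace ℝ E]
    {a : ℝ} {n : WithTop ℕ∞} {q : E → ℝ} {qbar : ℝ → ℝ} {u : E} (hu : ‖u‖ = 1)
    (hq : ContDiffOn ℝ n q (ball 0 a)) (hrad : ∀ x ∈ ball 0 a, q x = qbar ‖x‖) :
    ContDiffOn ℝ n (fun r => qbar |r|) (Ioo (-a) a) := by
  have hmaps : MapsTo (fun r : ℝ => r • u) (Ioo (-a) a) (ball 0 a) := fun r hr => by
    simpa [norm_smul, hu] using abs_lt.mpr hr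
  refine (hq.comp (contDiff_id.smul contDiff_const).contDiffOn hmaps).congr fun r hr => ?_
  simp [hrad _ (hmaps hr), norm_smul, hu]

theorem radial_smoothness_iff
    (a : ℝ) (ha : 0 < a) (n : ℕ)
    (q : EuclideanSpace ℝ (Fin 3) → ℝ) (qbar : ℝ → ℝ)
    (hrad : ∀ x ∈ Metric.ball (0 : EuclideanSpace ℝ (Fin 3)) a, q x = qbar ‖x‖) :
    ContDiffOn ℝ n q (Metric.ball (0 : EuclideanSpace ℝ (Fin 3)) a) ↔
      (ContDiffOn ℝ n qbar (Set.Ico 0 a) ∧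
        ∀ k, k ≤ n → Odd k → iteratedDerivWithin k qbar (Set.Ico 0 a) 0 = 0) := by
  constructor
  · intro hq
    have hu : ‖EuclideanSpace.single (0 : Fin 3) (1 : ℝ)‖ = 1 := by simp
    have hQ := contDiffOn_comp_abs_of_radial hu hq hrad
    exact ⟨contDiffOn_Ico_of_comp_abs hQ,
      fun k hk hodd => iteratedDerivWithin_Ico_eq_zero_of_comp_abs ha hQ hk hodd⟩
  · rintro ⟨hqbar, hodd⟩
    have hT := contDiff_taylorWithinEval_norm (E := EuclideanSpace ℝ (Fin 3)) hodd (m := n)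
    have hR := (isFlatWithin_sub_taylorWithinEval (uniqueDiffOn_Ico 0 a) ⟨le_rfl, ha⟩
      hqbar).contDiffOn_comp_norm (E := EuclideanSpace ℝ (Fin 3)) ha
    exact (hT.contDiffOn.add hR).congr fun x hx => by simp [hrad x hx]
end

section
/- Let L⁺ = d²/dr² + b(r) d/dr + c(r) on the interval I = (0,a) with |b| and |c| locally bounded on (0,a] and c(r) ≤ 0. Let f ∈ C²(I) ∩ C⁰([0,a]) ∩ C¹((0,a]) satisfy L⁺ f = 0. If f(a) > f(0) ≥ 0 then f'(a) > 0. -/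
open Set

/-- A locally bounded function on `Ioc 0 a` is bounded on compact subintervals. -/
lemma loc_bdd_compact (a s₀ : ℝ) (b : ℝ → ℝ) (hs₀ : 0 < s₀) (hsa : s₀ ≤ a)
    (hb : ∀ r ∈ Set.Ioc 0 a, ∃ s ∈ nhdsWithin r (Set.Ioc 0 a), ∃ C : ℝ, ∀ y ∈ s, |b y| ≤ C) :
    ∃ C : ℝ, ∀ y ∈ Set.Icc s₀ a, |b y| ≤ C := by
  classical
  have hsub : Set.Icc s₀ a ⊆ Set.Ioc 0 a := fun y hy => ⟨hs₀.trans_le hy.1, hy.2⟩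
  have key : ∀ x (_ : x ∈ Set.Icc s₀ a), ∃ U : Set ℝ,
      (U ∈ nhds x) ∧ ∃ C : ℝ, ∀ y ∈ U ∩ Set.Ioc 0 a, |b y| ≤ C := by
    intro x hx
    obtain ⟨s, hs, C, hC⟩ := hb x (hsub hx)
    obtain ⟨U, hUo, hxU, hUs⟩ := mem_nhdsWithin.1 hs
    exact ⟨U, hUo.mem_nhds hxU, C, fun y hy => hC y (hUs hy)⟩
  choose U hU C hC using key
  obtain ⟨t, ht⟩ := isCompact_Icc.elim_nhds_subcover' U hU
  refine ⟨((t.sup fun x => ⌈max (C x x.2) 0⌉₊ : ℕ) : ℝ), fun y hy => ?_⟩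
  obtain ⟨x, hxt, hyU⟩ := Set.mem_iUnion₂.1 (ht hy)
  calc |b y| ≤ C x x.2 := hC x x.2 y ⟨hyU, hsub hy⟩
    _ ≤ max (C x x.2) 0 := le_max_left _ _
    _ ≤ (⌈max (C x x.2) 0⌉₊ : ℝ) := Nat.le_ceil _
    _ ≤ _ := Nat.cast_le.2 (Finset.le_sup (f := fun x : (Set.Icc s₀ a : Set ℝ) => ⌈max (C x x.2) 0⌉₊) hxt)

theorem boundary_point_positive_derivative
    (a : ℝ) (ha : 0 < a) (b c f f' f'' : ℝ → ℝ)
    (hb : ∀ r ∈ Set.Ioc 0 a, ∃ s ∈ nhdsWithin r (Set.Ioc 0 a), ∃ C : ℝ, ∀ y ∈ s, |b y| ≤ C)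
    (hc : ∀ r ∈ Set.Ioc 0 a, ∃ s ∈ nhdsWithin r (Set.Ioc 0 a), ∃ C : ℝ, ∀ y ∈ s, |c y| ≤ C)
    (hcneg : ∀ r ∈ Set.Ioc 0 a, c r ≤ 0)
    (hfc : ContinuousOn f (Set.Icc 0 a))
    (hf1 : ∀ r ∈ Set.Ioc 0 a, HasDerivWithinAt f (f' r) (Set.Ioc 0 a) r)
    (hf1c : ContinuousOn f' (Set.Ioc 0 a))
    (hf2 : ∀ r ∈ Set.Ioo 0 a, HasDerivAt f' (f'' r) r)
    (hode : ∀ r ∈ Set.Ioo 0 a, f'' r + b r * f' r + c r * f r = 0)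
    (h0 : 0 ≤ f 0) (hlt : f 0 < f a) :
    0 < f' a := by
  by_contra hcon
  push_neg at hcon
  have hfa : 0 < f a := lt_of_le_of_lt h0 hlt
  -- f has a true derivative at interior points
  have hfd : ∀ y ∈ Set.Ioo 0 a, HasDerivAt f (f' y) y := by
    intro y hy
    exact (hf1 y (Set.Ioo_subset_Ioc_self hy)).hasDerivAt
      (mem_nhds_iff.2 ⟨Set.Ioo 0 a, Set.Ioo_subset_Ioc_self, isOpen_Ioo, hy⟩)
  -- The set S of "bad" points, and t := sup S
  set S : Set ℝ := insert 0 {r ∈ Set.Icc 0 a | f r ≤ 0} with hS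
  have hSsub : S ⊆ Set.Icc 0 a := by
    rintro x (rfl | hx)
    · exact ⟨le_refl 0, ha.le⟩
    · exact hx.1
  have hSclosed : IsClosed S := by
    rw [hS, Set.insert_eq]
    exact isClosed_singleton.union
      (hfc.preimage_isClosed_of_isClosed isClosed_Icc isClosed_Iic)
  have hScompact : IsCompact S := isCompact_Icc.of_isClosed_subset hSclosed hSsub
  have hSne : S.Nonempty := ⟨0, Set.mem_insert 0 _⟩
  set t := sSup S with htdef
  have htS : t ∈ S := hScompact.sSup_mem hSne
  have ht0 : 0 ≤ t := le_csSup hScompact.bddAbove (Set.mem_insert 0 _)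
  -- t < a : f > 0 near a
  have hta : t < a := by
    have hcw : ContinuousWithinAt f (Set.Icc 0 a) a := hfc a ⟨ha.le, le_refl a⟩
    have hmem : f ⁻¹' (Set.Ioi 0) ∈ nhdsWithin a (Set.Icc 0 a) :=
      hcw (isOpen_Ioi.mem_nhds hfa)
    obtain ⟨U, hUo, haU, hUsub⟩ := mem_nhdsWithin.1 hmem
    obtain ⟨ε, hε, hball⟩ := Metric.isOpen_iff.1 hUo a haU
    have hub : ∀ x ∈ S, x ≤ max 0 (a - ε / 2) := by
      rintro x (rfl | hx)
      · exact le_max_left 0 _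
      · by_contra hgt
        push_neg at hgt
        simp only [Set.mem_setOf_eq, Set.mem_Icc] at hx
        obtain ⟨⟨hx0', hxa'⟩, hxneg⟩ := hx
        have hx1 : a - ε / 2 < x := lt_of_le_of_lt (le_max_right _ _) hgt
        have hxU : x ∈ U := by
          apply hball
          rw [Metric.mem_ball, Real.dist_eq, abs_lt]
          constructor <;> linarith
        have := hUsub ⟨hxU, ⟨hx0', hxa'⟩⟩
        simp only [Set.mem_preimage, Set.mem_Ioi] at this
        linarith
    exact lt_of_le_of_lt (csSup_le hSne hub) (max_lt ha (by linarith))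
  -- f > 0 on (t, a]
  have hfpos : ∀ x ∈ Set.Ioc t a, 0 < f x := by
    intro x hx
    by_contra hfx
    push_neg at hfx
    have hxS : x ∈ S := Set.mem_insert_iff.2 (Or.inr ⟨⟨ht0.trans hx.1.le, hx.2⟩, hfx⟩)
    exact absurd (le_csSup hScompact.bddAbove hxS) (not_le.2 hx.1)
  -- Main claim: f' ≤ 0 on (t, a]
  have hA : ∀ s ∈ Set.Ioc t a, f' s ≤ 0 := by
    intro s hs
    rcases eq_or_lt_of_le hs.2 with heq | hsa'
    · rw [heq]; exact hcon
    by_contra hgs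
    push_neg at hgs
    have hs0 : 0 < s := lt_of_le_of_lt ht0 hs.1
    obtain ⟨C, hC⟩ := loc_bdd_compact a s b hs0 hs.2 hb
    have hIsub : Set.Icc s a ⊆ Set.Ioc 0 a := fun y hy => ⟨hs0.trans_le hy.1, hy.2⟩
    have hconT : ContinuousOn f' (Set.Icc s a) := hf1c.mono hIsub
    -- f' has a zero in [s, a]
    have hzero : ∃ u ∈ Set.Icc s a, f' u = 0 := by
      obtain ⟨u, hu, hu0⟩ := intermediate_value_Icc' hs.2 hconT ⟨hcon, hgs.le⟩
      exact ⟨u, hu, hu0⟩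
    set T : Set ℝ := {y ∈ Set.Icc s a | f' y = 0} with hT
    have hTclosed : IsClosed T :=
      hconT.preimage_isClosed_of_isClosed isClosed_Icc isClosed_singleton
    have hTcompact : IsCompact T :=
      isCompact_Icc.of_isClosed_subset hTclosed (fun y hy => hy.1)
    have hTne : T.Nonempty := by obtain ⟨u, hu, hu0⟩ := hzero; exact ⟨u, hu, hu0⟩
    set u := sInf T with hu
    have huT : u ∈ T := hTcompact.sInf_mem hTne
    have hsu : s < u := by
      rcases eq_or_lt_of_le huT.1.1 with heq | h
      · exfalso; rw [← heq] at huT; linarith [huT.2]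
      · exact h
    -- f' > 0 on [s, u)
    have hpos' : ∀ y ∈ Set.Ico s u, 0 < f' y := by
      intro y hy
      by_contra hneg
      push_neg at hneg
      have hya : y ≤ a := hy.2.le.trans huT.1.2
      obtain ⟨z, hz, hz0⟩ := intermediate_value_Icc' hy.1
        (hconT.mono (fun w hw => ⟨hw.1, hw.2.trans hya⟩)) ⟨hneg, hgs.le⟩
      have hzT : z ∈ T := ⟨⟨hz.1, hz.2.trans hya⟩, hz0⟩
      have := csInf_le hTcompact.bddBelow hzT
      have : u ≤ y := this.trans hz.2
      linarith [hy.2]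
    -- The function G y = exp (C y) * f' y is monotone on [s, u]
    set G : ℝ → ℝ := fun y => Real.exp (C * y) * f' y with hG
    have hGd : ∀ y ∈ Set.Ioo s u, HasDerivAt G (Real.exp (C * y) * C * f' y
        + Real.exp (C * y) * f'' y) y := by
      intro y hy
      have hya : y ∈ Set.Ioo 0 a := ⟨hs0.trans hy.1, hy.2.trans_le huT.1.2⟩
      have h1 : HasDerivAt (fun y : ℝ => Real.exp (C * y)) (Real.exp (C * y) * C) y := by
        simpa using ((hasDerivAt_id y).const_mul C).exp
      exact h1.mul (hf2 y hya)
    have hGcont : ContinuousOn G (Set.Icc s u) := by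
      apply ContinuousOn.mul
      · exact (Real.continuous_exp.comp (continuous_const.mul continuous_id)).continuousOn
      · exact hconT.mono (fun y hy => ⟨hy.1, hy.2.trans huT.1.2⟩)
    have hGmono : MonotoneOn G (Set.Icc s u) := by
      apply monotoneOn_of_deriv_nonneg (convex_Icc s u) hGcont
      · intro y hy
        rw [interior_Icc] at hy
        exact (hGd y hy).differentiableAt.differentiableWithinAt
      · intro y hy
        rw [interior_Icc] at hy
        rw [(hGd y hy).deriv]
        have hya : y ∈ Set.Ioo 0 a := ⟨hs0.trans hy.1, hy.2.trans_le huT.1.2⟩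
        have hode' := hode y hya
        have hfy : 0 < f y := hfpos y ⟨hs.1.trans hy.1, hya.2.le⟩
        have hfy' : 0 < f' y := hpos' y ⟨hy.1.le, hy.2⟩
        have hcy : c y ≤ 0 := hcneg y (Set.Ioo_subset_Ioc_self hya)
        have hby : |b y| ≤ C := hC y ⟨hy.1.le, hya.2.le⟩
        have hby' : b y ≤ C := (le_abs_self _).trans hby
        have hexp : 0 < Real.exp (C * y) := Real.exp_pos _
        nlinarith [mul_nonneg (sub_nonneg.2 hby') hfy'.le,
          mul_nonneg (neg_nonneg.2 hcy) hfy.le]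
    have h1 : G s ≤ G u := hGmono ⟨le_refl s, hsu.le⟩ ⟨hsu.le, le_refl u⟩ hsu.le
    have h2 : G u = 0 := by rw [hG]; simp [huT.2]
    have h3 : 0 < G s := mul_pos (Real.exp_pos _) hgs
    linarith
  -- hence f is antitone on (t, a], so f a ≤ f x there
  have hanti : ∀ x ∈ Set.Ioc t a, f a ≤ f x := by
    intro x hx
    have hx0 : 0 ≤ x := ht0.trans hx.1.le
    have : AntitoneOn f (Set.Icc x a) := by
      apply antitoneOn_of_deriv_nonpos (convex_Icc x a)
        (hfc.mono (fun y hy => ⟨hx0.trans hy.1, hy.2⟩))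
      · intro y hy
        rw [interior_Icc] at hy
        have hya : y ∈ Set.Ioo 0 a := ⟨(ht0.trans_lt hx.1).trans hy.1, hy.2⟩
        exact (hfd y hya).differentiableAt.differentiableWithinAt
      · intro y hy
        rw [interior_Icc] at hy
        have hya : y ∈ Set.Ioo 0 a := ⟨(ht0.trans_lt hx.1).trans hy.1, hy.2⟩
        rw [(hfd y hya).deriv]
        exact hA y ⟨hx.1.trans hy.1, hy.2.le⟩
    exact this ⟨le_refl x, hx.2⟩ ⟨hx.2, le_refl a⟩ hx.2
  -- take the limit as x → t⁺ : f a ≤ f t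
  have hft : f a ≤ f t := by
    have hcw : ContinuousWithinAt f (Set.Ioc t a) t :=
      (hfc t ⟨ht0, hta.le⟩).mono (fun y hy => ⟨ht0.trans hy.1.le, hy.2⟩)
    have : Filter.NeBot (nhdsWithin t (Set.Ioc t a)) := left_nhdsWithin_Ioc_neBot hta
    exact ge_of_tendsto hcw (eventually_mem_nhdsWithin.mono (fun y hy => hanti y hy))
  -- contradiction
  rcases htS with h | hbad
  · rw [h] at hft; linarith
  · linarith [hbad.2]
end

section
/- Let L⁻ = d²/dr² + b(r) d/dr + c(r) on I = (a,∞) with |b| and |c| bounded on [a,∞) and c(r) ≤ 0. Let f ∈ C²(I) ∩ C¹([a,∞)) satisfy L⁻ f = 0 and lim_{r→∞} f(r) = f_∞ finite. If f(a) > f_∞ ≥ 0 then f'(a) < 0. -/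
/-!
Suppose `f' a ≥ 0`. Since `f → f_∞ < f a`, there is `R > a` with `f R < f a`, so it suffices
to show that on `[p, q]` a subsolution `f'' + b f' + c f ≥ 0` (with `b` bounded below and
`c ≤ 0`) satisfying `f p > 0` and `f' p ≥ 0` cannot end with `f q < f p`. Perturb `f` by the
barrier `ε (exp (α (r - p)) - 1)` with `α` so large that `b + α ≥ 1`, and `ε` so small that the
perturbation `w` still satisfies `w q < w p` and `f ≥ 0` wherever `w ≥ w p`. A maximum point `x` of
`w` on `[p, q]` then lies in `[p, q)`. At `x = p` this contradicts `w' p = f' p + εα > 0`; at an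
interior `x` we have `w' x = 0`, and the equation forces `w'' x ≥ εα (b + α) e^{α(x-p)} > 0`,
contradicting the second derivative test.
-/

open Set Filter Topology Real

lemma IsMaxOn.hasDerivWithinAt_nonpos {w : ℝ → ℝ} {s : Set ℝ} {x y d : ℝ}
    (hmax : IsMaxOn w s x) (hxy : x < y) (hxys : Icc x y ⊆ s) (hd : HasDerivWithinAt w d s x) :
    d ≤ 0 := by
  have h := hmax.localize.hasFDerivWithinAt_nonpos hd.hasFDerivWithinAt
    (sub_mem_posTangentConeAt_of_segment_subset ((segment_eq_Icc hxy.le).trans_subset hxys))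
  simp only [ContinuousLinearMap.toSpanSingleton_apply, smul_eq_mul] at h
  exact nonpos_of_mul_nonpos_right h (sub_pos.mpr hxy)

lemma IsLocalMax.hasDerivAt_deriv_nonpos {w w' : ℝ → ℝ} {x d : ℝ} (hmax : IsLocalMax w x)
    (hw : ∀ᶠ y in 𝓝 x, HasDerivAt w (w' y) y) (hw'x : w' x = 0) (hd : HasDerivAt w' d x) :
    d ≤ 0 := by
  by_contra! hdpos
  have hw'pos : ∀ᶠ y in 𝓝[>] x, 0 < w' y := by
    filter_upwards [nhdsGT_le_nhdsNE x <|
        (hasDerivAt_iff_tendsto_slope.mp hd).eventually (eventually_gt_nhds hdpos),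
      self_mem_nhdsWithin] with y hslope hxy
    exact pos_of_slope_pos hxy hslope hw'x
  obtain ⟨u, hxu, hu⟩ := (nhdsGT_basis x).eventually_iff.mp
    ((hw.and hmax).filter_mono nhdsWithin_le_nhds |>.and hw'pos)
  obtain ⟨y, hxy, hyu⟩ := exists_between hxu
  have hderiv : ∀ t ∈ Icc x y, HasDerivAt w (w' t) t := fun t ht =>
    ht.1.eq_or_lt.elim (fun h => h ▸ hw.self_of_nhds) fun h => (hu ⟨h, ht.2.trans_lt hyu⟩).1.1
  obtain ⟨ξ, hξ, hslope⟩ := exists_hasDerivAt_eq_slope w w' hxy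
    (fun t ht => (hderiv t ht).continuousAt.continuousWithinAt)
    (fun t ht => hderiv t (Ioo_subset_Icc_self ht))
  have hw'ξ : 0 < w' ξ := (hu ⟨hξ.1, hξ.2.trans hyu⟩).2
  have hwy : w y ≤ w x := (hu ⟨hxy, hyu⟩).1.2
  rw [hslope] at hw'ξ
  exact (div_pos_iff_of_pos_right (sub_pos.mpr hxy)).mp hw'ξ |>.not_ge (sub_nonpos.mpr hwy)

lemma IsMaxOn.deriv_eq_zero_and_deriv_deriv_nonpos_of_mem_Ioo {w w' : ℝ → ℝ} {p q x d : ℝ}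
    (hmax : IsMaxOn w (Icc p q) x) (hx : x ∈ Ioo p q)
    (hw : ∀ r ∈ Icc p q, HasDerivWithinAt w (w' r) (Icc p q) r) (hd : HasDerivAt w' d x) :
    w' x = 0 ∧ d ≤ 0 := by
  have hIcc : Icc p q ∈ 𝓝 x := Icc_mem_nhds hx.1 hx.2
  have hw'x : w' x = 0 := (hmax.isLocalMax hIcc).hasDerivAt_eq_zero
    ((hw x (Ioo_subset_Icc_self hx)).hasDerivAt hIcc)
  have hw_nhds : ∀ᶠ y in 𝓝 x, HasDerivAt w (w' y) y := by
    filter_upwards [Ioo_mem_nhds hx.1 hx.2] with y hy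
    exact (hw y (Ioo_subset_Icc_self hy)).hasDerivAt (Icc_mem_nhds hy.1 hy.2)
  exact ⟨hw'x, (hmax.isLocalMax hIcc).hasDerivAt_deriv_nonpos hw_nhds hw'x hd⟩

lemma hasDerivAt_exp_mul_sub (α p r : ℝ) :
    HasDerivAt (fun r => exp (α * (r - p))) (α * exp (α * (r - p))) r := by
  simpa [mul_comm] using (((hasDerivAt_id r).sub_const p).const_mul α).exp

theorem subsolution_deriv_left_neg {p q B : ℝ} {b c f f' f'' : ℝ → ℝ} (hpq : p < q)
    (hb : ∀ r ∈ Ioo p q, -B ≤ b r) (hc : ∀ r ∈ Ioo p q, c r ≤ 0)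
    (hf : ∀ r ∈ Icc p q, HasDerivWithinAt f (f' r) (Icc p q) r)
    (hf' : ∀ r ∈ Ioo p q, HasDerivAt f' (f'' r) r)
    (hL : ∀ r ∈ Ioo p q, 0 ≤ f'' r + b r * f' r + c r * f r)
    (hpos : 0 < f p) (hq : f q < f p) :
    f' p < 0 := by
  by_contra! hf'p
  obtain ⟨α, hα, hbα⟩ : ∃ α > 0, ∀ r ∈ Ioo p q, 1 ≤ b r + α :=
    ⟨|B| + 1, by positivity, fun r hr => by linarith [hb r hr, le_abs_self B]⟩
  obtain ⟨δ, hδ, hδq, hδp⟩ : ∃ δ > 0, f q + δ ≤ f p ∧ δ ≤ f p :=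
    ⟨min (f p - f q) (f p), lt_min (by linarith) hpos,
      by linarith [min_le_left (f p - f q) (f p)], min_le_right _ _⟩
  set E := fun r => exp (α * (r - p))
  have hEq : 1 < E q := one_lt_exp_iff.mpr (by positivity)
  obtain ⟨ε, hε, hεEq⟩ : ∃ ε > 0, ε * (E q - 1) = δ / 2 :=
    ⟨δ / (2 * (E q - 1)), by positivity, by field_simp [(sub_pos.mpr hEq).ne']⟩
  set w := fun r => f r + ε * (E r - 1)
  set w' := fun r => f' r + ε * (α * E r)
  have hw : ∀ r ∈ Icc p q, HasDerivWithinAt w (w' r) (Icc p q) r := fun r hr =>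
    (hf r hr).add (((hasDerivAt_exp_mul_sub α p r).sub_const 1).const_mul ε).hasDerivWithinAt
  obtain ⟨x, hx, hwmax⟩ := isCompact_Icc.exists_isMaxOn (nonempty_Icc.mpr hpq.le)
    fun r hr => (hw r hr).continuousWithinAt
  have hwx : f p ≤ w x := by simpa [w, E] using hwmax (left_mem_Icc.mpr hpq.le)
  have hxq : x < q := by
    refine hx.2.lt_of_ne fun hxq => ?_
    have : w q = f q + δ / 2 := by simp [w, hεEq]
    rw [hxq] at hwx
    linarith
  have hfx : 0 ≤ f x := by
    have : E x ≤ E q := exp_le_exp.mpr (mul_le_mul_of_nonneg_left (sub_le_sub_right hx.2 p) hα.le)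
    have : ε * (E x - 1) ≤ δ / 2 := hεEq ▸ mul_le_mul_of_nonneg_left (by linarith) hε.le
    linarith [show w x = f x + ε * (E x - 1) from rfl]
  rcases hx.1.eq_or_lt with rfl | hpx
  · have : w' p ≤ 0 := hwmax.hasDerivWithinAt_nonpos hxq subset_rfl (hw p hx)
    have : w' p = f' p + ε * α := by simp [w', E]
    linarith [mul_pos hε hα]
  · have hxpq : x ∈ Ioo p q := ⟨hpx, hxq⟩
    obtain ⟨hw'x, hw''⟩ : w' x = 0 ∧ f'' x + ε * (α * (α * E x)) ≤ 0 :=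
      hwmax.deriv_eq_zero_and_deriv_deriv_nonpos_of_mem_Ioo hxpq hw
        ((hf' x hxpq).add (((hasDerivAt_exp_mul_sub α p x).const_mul α).const_mul ε))
    have hεαE : 0 < ε * (α * E x) := by positivity
    have hf'x : f' x = -(ε * (α * E x)) := by linarith [show w' x = f' x + ε * (α * E x) from rfl]
    have hLx := hL x hxpq
    rw [hf'x] at hLx
    linarith [mul_nonneg (neg_nonneg.mpr (hc x hxpq)) hfx,
      mul_le_mul_of_nonneg_right (hbα x hxpq) hεαE.le]

theorem boundary_point_negative_derivative_exterior_general
    (a finf : ℝ) (b c f f' f'' : ℝ → ℝ)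
    (hb : ∃ C : ℝ, ∀ r ∈ Set.Ici a, |b r| ≤ C)
    (hcneg : ∀ r ∈ Set.Ici a, c r ≤ 0)
    (hf1 : ∀ r ∈ Set.Ici a, HasDerivWithinAt f (f' r) (Set.Ici a) r)
    (hf2 : ∀ r ∈ Set.Ioi a, HasDerivAt f' (f'' r) r)
    (hode : ∀ r ∈ Set.Ioi a, f'' r + b r * f' r + c r * f r = 0)
    (hlim : Filter.Tendsto f Filter.atTop (nhds finf))
    (hpos : 0 ≤ finf) (hgt : finf < f a) :
    f' a < 0 := by
  obtain ⟨C, hC⟩ := hb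
  obtain ⟨R, hfR, haR⟩ :=
    ((hlim.eventually (gt_mem_nhds hgt)).and (eventually_gt_atTop a)).exists
  exact subsolution_deriv_left_neg haR (B := C) (fun r hr => (abs_le.mp (hC r hr.1.le)).1)
    (fun r hr => hcneg r hr.1.le) (fun r hr => (hf1 r hr.1).mono Icc_subset_Ici_self)
    (fun r hr => hf2 r hr.1) (fun r hr => (hode r hr.1).ge) (hpos.trans_lt hgt) hfR

theorem boundary_point_negative_derivative_exterior
    (a finf : ℝ) (ha : 0 < a) (b c f f' f'' : ℝ → ℝ)
    (hb : ∃ C : ℝ, ∀ r ∈ Set.Ici a, |b r| ≤ C)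
    (hc : ∃ C : ℝ, ∀ r ∈ Set.Ici a, |c r| ≤ C)
    (hcneg : ∀ r ∈ Set.Ici a, c r ≤ 0)
    (hf1 : ∀ r ∈ Set.Ici a, HasDerivWithinAt f (f' r) (Set.Ici a) r)
    (hf1c : ContinuousOn f' (Set.Ici a))
    (hf2 : ∀ r ∈ Set.Ioi a, HasDerivAt f' (f'' r) r)
    (hode : ∀ r ∈ Set.Ioi a, f'' r + b r * f' r + c r * f r = 0)
    (hlim : Filter.Tendsto f Filter.atTop (nhds finf))
    (hpos : 0 ≤ finf) (hgt : finf < f a) :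
    f' a < 0 :=
  boundary_point_negative_derivative_exterior_general a finf b c f f' f'' hb hcneg hf1 hf2 hode hlim
    hpos hgt
end

section
/- Let f ∈ C²((a,∞)) ∩ C¹([a,∞)) satisfy f'' + b(r) f' + c(r) f = 0 on (a,∞) with |b|, |c| bounded on [a,∞) and c(r) ≤ 0. If f(a) = 0 and lim_{r→∞} f(r) = 0 then f is identically zero on [a,∞). -/
/-!
A maximum-principle argument. If `f` were positive somewhere, then, since `f(a) = 0` and
`f → 0`, it would have an interior maximum `f(r₀) > 0` with `f'(r₀) = 0`. While `f ≥ 0`, the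
equation and `c ≤ 0` give `f'' ≥ -b f' ≥ C f'` (with `|b| ≤ C`) wherever `f' < 0`, and this
one-sided Grönwall inequality keeps `f'` from ever becoming negative after `r₀`. Hence `f` never
drops below `f(r₀) > 0` to the right of `r₀`, contradicting `f → 0`. The same applied to `-f`
gives `f ≥ 0`.
-/

open Set Filter Topology Real

theorem nonneg_of_deriv_right_ge_mul_of_neg {ψ ψ' : ℝ → ℝ} {u v K : ℝ}
    (hψ : ContinuousOn ψ (Icc u v))
    (hψ' : ∀ x ∈ Ico u v, HasDerivWithinAt ψ (ψ' x) (Ici x) x) (hu : 0 ≤ ψ u)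
    (hK : ∀ x ∈ Ico u v, ψ x < 0 → K * ψ x ≤ ψ' x) {x : ℝ} (hx : x ∈ Icc u v) :
    0 ≤ ψ x := by
  set E := exp ((K + 1) * (x - u))
  -- Fence `-ψ` by `ε e^{(K+1)(t-u)}`, which grows strictly faster than `-ψ` can.
  have fence : ∀ ε > 0, -ψ x ≤ ε * E := by
    intro ε hε
    have hB : ∀ t, HasDerivAt (fun t => ε * exp ((K + 1) * (t - u)))
        (ε * exp ((K + 1) * (t - u)) * (K + 1)) t := fun t => by
      simpa [mul_assoc] using
        ((((hasDerivAt_id t).sub_const u).const_mul (K + 1)).exp).const_mul ε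
    refine image_le_of_deriv_right_lt_deriv_boundary (f := fun t => -ψ t) hψ.neg
      (fun t ht => (hψ' t ht).neg) ?_ hB ?_ hx
    · simp only [sub_self, mul_zero, exp_zero, mul_one]; linarith
    · intro t ht hψB
      have hBpos : 0 < ε * exp ((K + 1) * (t - u)) := by positivity
      rw [← hψB] at hBpos ⊢
      linarith [hK t ht (by linarith), show -ψ t * (K + 1) = -(K * ψ t) + -ψ t by ring]
  refine le_of_forall_pos_le_add fun δ hδ => ?_
  have hE : 0 < E := exp_pos _
  have := fence (δ / E) (by positivity)
  rw [div_mul_cancel₀ δ hE.ne'] at this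
  linarith

structure SolvesOn (b c f f' f'' : ℝ → ℝ) (s : Set ℝ) : Prop where
  hasDerivAt : ∀ x ∈ s, HasDerivAt f (f' x) x
  hasDerivAt_deriv : ∀ x ∈ s, HasDerivAt f' (f'' x) x
  eq : ∀ x ∈ s, f'' x + b x * f' x + c x * f x = 0

namespace SolvesOn

variable {b c f f' f'' : ℝ → ℝ} {s t : Set ℝ} {C u v : ℝ}

theorem mono (h : SolvesOn b c f f' f'' s) (hts : t ⊆ s) : SolvesOn b c f f' f'' t :=
  ⟨fun x hx => h.1 x (hts hx), fun x hx => h.2 x (hts hx), fun x hx => h.3 x (hts hx)⟩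

theorem neg (h : SolvesOn b c f f' f'' s) : SolvesOn b c (-f) (-f') (-f'') s :=
  ⟨fun x hx => (h.1 x hx).neg, fun x hx => (h.2 x hx).neg,
    fun x hx => by simp only [Pi.neg_apply]; linarith [h.3 x hx]⟩

theorem deriv_nonneg (h : SolvesOn b c f f' f'' (Icc u v)) (hb : ∀ x ∈ Icc u v, |b x| ≤ C)
    (hc : ∀ x ∈ Icc u v, c x ≤ 0) (hf : ∀ x ∈ Ico u v, 0 ≤ f x) (hu : 0 ≤ f' u) :
    ∀ x ∈ Icc u v, 0 ≤ f' x := by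
  refine fun x hx => nonneg_of_deriv_right_ge_mul_of_neg (K := C)
    (fun y hy => (h.2 y hy).continuousAt.continuousWithinAt)
    (fun y hy => (h.2 y (Ico_subset_Icc_self hy)).hasDerivWithinAt) hu ?_ hx
  intro y hy hneg
  have hy' := Ico_subset_Icc_self hy
  have hbf : b y * f' y ≤ C * -f' y :=
    calc b y * f' y ≤ |b y| * |f' y| := (abs_mul (b y) (f' y)).symm ▸ le_abs_self _
      _ ≤ C * -f' y := by
        rw [abs_of_neg hneg]; exact mul_le_mul_of_nonneg_right (hb y hy') (by linarith)
  have hcf : c y * f y ≤ 0 := mul_nonpos_of_nonpos_of_nonneg (hc y hy') (hf y hy)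
  linarith [h.3 y hy']

theorem monotoneOn (h : SolvesOn b c f f' f'' (Icc u v)) (hb : ∀ x ∈ Icc u v, |b x| ≤ C)
    (hc : ∀ x ∈ Icc u v, c x ≤ 0) (hf : ∀ x ∈ Ico u v, 0 ≤ f x) (hu : 0 ≤ f' u) :
    MonotoneOn f (Icc u v) :=
  monotoneOn_of_hasDerivWithinAt_nonneg (convex_Icc u v)
    (fun x hx => (h.1 x hx).continuousAt.continuousWithinAt)
    (fun x hx => (h.1 x (interior_subset hx)).hasDerivWithinAt)
    (fun x hx => h.deriv_nonneg hb hc hf hu x (interior_subset hx))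

theorem le_of_pos_of_deriv_nonneg (h : SolvesOn b c f f' f'' (Ici u)) (hb : ∀ x ∈ Ici u, |b x| ≤ C)
    (hc : ∀ x ∈ Ici u, c x ≤ 0) (hfu : 0 < f u) (hu : 0 ≤ f' u) : ∀ v ∈ Ici u, f u ≤ f v := by
  intro v hv
  have hsub : Icc u v ⊆ Ici u := Icc_subset_Ici_self
  have hfc : ContinuousOn f (Icc u v) := fun x hx =>
    (h.1 x (hsub hx)).continuousAt.continuousWithinAt
  have hpos : ∀ x ∈ Icc u v, 0 < f x := by
    by_contra! hneg
    set S := Icc u v ∩ f ⁻¹' Iic 0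
    have hS : S.Nonempty := hneg
    have hSc : IsClosed S := hfc.preimage_isClosed_of_isClosed isClosed_Icc isClosed_Iic
    -- `z` is the first point of `[u, v]` where `f` stops being positive.
    have hz : sInf S ∈ S := hSc.csInf_mem hS ⟨u, fun x hx => hx.1.1⟩
    set z := sInf S
    have hfz : ∀ x ∈ Ico u z, 0 ≤ f x := fun x hx => by
      by_contra! hfx
      exact hx.2.not_ge (csInf_le ⟨u, fun y hy => hy.1.1⟩
        ⟨⟨hx.1, hx.2.le.trans hz.1.2⟩, hfx.le⟩)
    have hsub' : Icc u z ⊆ Icc u v := Icc_subset_Icc_right hz.1.2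
    have := (h.mono (hsub'.trans hsub)).monotoneOn (fun x hx => hb x (hsub (hsub' hx)))
      (fun x hx => hc x (hsub (hsub' hx))) hfz hu (left_mem_Icc.2 hz.1.1) (right_mem_Icc.2 hz.1.1)
      hz.1.1
    linarith [show f z ≤ 0 from hz.2]
  exact (h.mono hsub).monotoneOn (fun x hx => hb x (hsub hx)) (fun x hx => hc x (hsub hx))
    (fun x hx => (hpos x (Ico_subset_Icc_self hx)).le) hu (left_mem_Icc.2 hv)
    (right_mem_Icc.2 hv) hv

theorem nonpos_of_tendsto_zero {a : ℝ} (hsol : SolvesOn b c f f' f'' (Ioi a))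
    (hb : ∀ r ∈ Ioi a, |b r| ≤ C) (hc : ∀ r ∈ Ioi a, c r ≤ 0) (hfc : ContinuousOn f (Ici a))
    (hfa : f a = 0) (hlim : Tendsto f atTop (𝓝 0)) : ∀ r ∈ Ici a, f r ≤ 0 := by
  intro x hx
  by_contra! hfx
  obtain ⟨K, hfK, hxK⟩ := ((hlim.eventually (gt_mem_nhds hfx)).and (eventually_ge_atTop x)).exists
  have haK : a ≤ K := hx.trans hxK
  have hboundary : ∀ z ∈ Icc a K \ Ioo a K, f z < f x := by
    rw [Icc_sdiff_Ioo_same haK]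
    rintro z (rfl | rfl)
    exacts [hfa ▸ hfx, hfK]
  obtain ⟨r₀, hr₀, hmax⟩ := isCompact_Icc.exists_isMaxOn_mem_subset
    (hfc.mono Icc_subset_Ici_self) ⟨hx, hxK⟩ hboundary
  have hsub : Ici r₀ ⊆ Ioi a := Ici_subset_Ioi.2 hr₀.1
  have hf'r₀ : f' r₀ = 0 :=
    (hmax.isLocalMax (Icc_mem_nhds hr₀.1 hr₀.2)).hasDerivAt_eq_zero
      (hsol.1 r₀ (hsub self_mem_Ici))
  have hfr₀ : 0 < f r₀ := hfx.trans_le (hmax ⟨hx, hxK⟩)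
  have hgrow := (hsol.mono hsub).le_of_pos_of_deriv_nonneg (fun r hr => hb r (hsub hr))
    (fun r hr => hc r (hsub hr)) hfr₀ hf'r₀.ge
  have : f r₀ ≤ 0 := ge_of_tendsto hlim ((eventually_ge_atTop r₀).mono hgrow)
  linarith

end SolvesOn

theorem vanishing_data_exterior_zero_solution_general
    (a : ℝ) (b c f f' f'' : ℝ → ℝ)
    (hb : ∃ C : ℝ, ∀ r ∈ Set.Ici a, |b r| ≤ C)
    (hcneg : ∀ r ∈ Set.Ici a, c r ≤ 0)
    (hf1 : ∀ r ∈ Set.Ici a, HasDerivWithinAt f (f' r) (Set.Ici a) r)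
    (hf2 : ∀ r ∈ Set.Ioi a, HasDerivAt f' (f'' r) r)
    (hode : ∀ r ∈ Set.Ioi a, f'' r + b r * f' r + c r * f r = 0)
    (hfa : f a = 0)
    (hlim : Filter.Tendsto f Filter.atTop (nhds 0)) :
    ∀ r ∈ Set.Ici a, f r = 0 := by
  obtain ⟨C, hC⟩ := hb
  have hb' : ∀ r ∈ Ioi a, |b r| ≤ C := fun r hr => hC r (Ioi_subset_Ici_self hr)
  have hc' : ∀ r ∈ Ioi a, c r ≤ 0 := fun r hr => hcneg r (Ioi_subset_Ici_self hr)
  have hsol : SolvesOn b c f f' f'' (Ioi a) :=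
    ⟨fun r hr => (hf1 r (Ioi_subset_Ici_self hr)).hasDerivAt (Ici_mem_nhds hr), hf2, hode⟩
  have hfc : ContinuousOn f (Ici a) := fun r hr => (hf1 r hr).continuousWithinAt
  intro r hr
  have hle := hsol.nonpos_of_tendsto_zero hb' hc' hfc hfa hlim r hr
  have hge := hsol.neg.nonpos_of_tendsto_zero hb' hc' hfc.neg (by simp [hfa])
    (by rw [← neg_zero]; exact hlim.neg) r hr
  simp only [Pi.neg_apply] at hge
  linarith

theorem vanishing_data_exterior_zero_solution
    (a : ℝ) (ha : 0 < a) (b c f f' f'' : ℝ → ℝ)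
    (hb : ∃ C : ℝ, ∀ r ∈ Set.Ici a, |b r| ≤ C)
    (hc : ∃ C : ℝ, ∀ r ∈ Set.Ici a, |c r| ≤ C)
    (hcneg : ∀ r ∈ Set.Ici a, c r ≤ 0)
    (hf1 : ∀ r ∈ Set.Ici a, HasDerivWithinAt f (f' r) (Set.Ici a) r)
    (hf1c : ContinuousOn f' (Set.Ici a))
    (hf2 : ∀ r ∈ Set.Ioi a, HasDerivAt f' (f'' r) r)
    (hode : ∀ r ∈ Set.Ioi a, f'' r + b r * f' r + c r * f r = 0)
    (hfa : f a = 0)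
    (hlim : Filter.Tendsto f Filter.atTop (nhds 0)) :
    ∀ r ∈ Set.Ici a, f r = 0 :=
  vanishing_data_exterior_zero_solution_general a b c f f' f'' hb hcneg hf1 hf2 hode hfa hlim
end

section
/- Consider t² x'' + t A(t) x' + t² Q(t) x = 0 on (0,t₀) with A ∈ C¹([0,t₀)), Q ∈ C¹([0,t₀)), A(0) > 1, and Q(0) ≠ 0. Then the (unique up to scaling) bounded solution x(t) extends to a C² function on [0,t₀) with x'(0) = 0. -/
/-!
Write `A t = A 0 + t R t` and let `w t = t ^ A 0 * exp (∫₀ᵗ R)`, so that `w' = w A / t` and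
`w = O(t ^ A 0)`. The equation becomes `(w x')' = -w Q x`, a derivative bounded by a multiple
of `w`. Hence `w x'` has a limit `c` at `0⁺`; if `c ≠ 0` then `|x'| ≳ t ^ (-A 0)`, which is not
integrable at `0` because `A 0 > 1`, so `x` would be unbounded. Thus `c = 0`, and comparing `w x'`
with `t w`, whose derivative is `w (1 + A)`, gives `|x'| ≤ M t`; so `x` has a limit `x₀`, and
L'Hôpital's rule for `w x' / (t w)` gives `x' / t → L := -Q 0 x₀ / (1 + A 0)`. Finally
`x'' = -(A x' / t + Q x) → -(A 0 L + Q 0 x₀) = L`, so `x` extends to a `C²` function on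
`[0, t₀)` with `x'(0) = 0`.
-/

open Set Filter Topology Function MeasureTheory Asymptotics

/-- `x` (with derivative `x'`) is a solution of `t² x'' + t A(t) x' + B(t) x = 0` on `(0, t₀)`. -/
def IsODESol (A B : ℝ → ℝ) (t0 : ℝ) (x x' : ℝ → ℝ) : Prop :=
  (∀ t ∈ Set.Ioo 0 t0, HasDerivAt x (x' t) t) ∧
  (∀ t ∈ Set.Ioo 0 t0, HasDerivAt x' (-(t * A t * x' t + B t * x t) / t ^ 2) t)

theorem exists_monotoneOn_Ioo_of_deriv_nonneg {φ φ' : ℝ → ℝ} {a : ℝ}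
    (hφ : ∀ᶠ t in 𝓝[>] a, HasDerivAt φ (φ' t) t ∧ 0 ≤ φ' t) :
    ∃ b > a, MonotoneOn φ (Ioo a b) := by
  obtain ⟨b, hab, hb⟩ := mem_nhdsGT_iff_exists_Ioo_subset.1 hφ
  refine ⟨b, hab, monotoneOn_of_hasDerivWithinAt_nonneg (f' := φ') (convex_Ioo a b)
    (fun t ht => (hb ht).1.continuousAt.continuousWithinAt) (fun t ht => ?_) (fun t ht => ?_)⟩
  · exact (hb (interior_subset ht)).1.hasDerivWithinAt
  · exact (hb (interior_subset ht)).2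

theorem eventually_le_of_tendsto_of_deriv_nonneg {φ φ' : ℝ → ℝ} {a l : ℝ}
    (hφ : ∀ᶠ t in 𝓝[>] a, HasDerivAt φ (φ' t) t ∧ 0 ≤ φ' t)
    (hl : Tendsto φ (𝓝[>] a) (𝓝 l)) : ∀ᶠ t in 𝓝[>] a, l ≤ φ t := by
  obtain ⟨b, hab, hmono⟩ := exists_monotoneOn_Ioo_of_deriv_nonneg hφ
  filter_upwards [Ioo_mem_nhdsGT hab] with t ht
  refine le_of_tendsto hl ?_
  filter_upwards [Ioo_mem_nhdsGT ht.1] with s hs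
  exact hmono ⟨hs.1, hs.2.trans ht.2⟩ ht hs.2.le

theorem eventually_abs_le_of_abs_deriv_le {f f' g g' : ℝ → ℝ} {a : ℝ}
    (hf : ∀ᶠ t in 𝓝[>] a, HasDerivAt f (f' t) t) (hg : ∀ᶠ t in 𝓝[>] a, HasDerivAt g (g' t) t)
    (hle : ∀ᶠ t in 𝓝[>] a, |f' t| ≤ g' t)
    (hf0 : Tendsto f (𝓝[>] a) (𝓝 0)) (hg0 : Tendsto g (𝓝[>] a) (𝓝 0)) :
    ∀ᶠ t in 𝓝[>] a, |f t| ≤ g t := by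
  have hsub := eventually_le_of_tendsto_of_deriv_nonneg (φ := fun t => g t - f t)
    (φ' := fun t => g' t - f' t) ?_ (by simpa using hg0.sub hf0)
  have hadd := eventually_le_of_tendsto_of_deriv_nonneg (φ := fun t => g t + f t)
    (φ' := fun t => g' t + f' t) ?_ (by simpa using hg0.add hf0)
  · filter_upwards [hsub, hadd] with t h₁ h₂
    exact abs_le.2 ⟨by linarith, by linarith⟩
  · filter_upwards [hf, hg, hle] with t hf hg hle
    exact ⟨hg.add hf, by linarith [neg_abs_le (f' t)]⟩
  · filter_upwards [hf, hg, hle] with t hf hg hle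
    exact ⟨hg.sub hf, by linarith [le_abs_self (f' t)]⟩

theorem exists_tendsto_of_abs_deriv_le {f f' : ℝ → ℝ} {a C : ℝ}
    (hf : ∀ᶠ t in 𝓝[>] a, HasDerivAt f (f' t) t ∧ |f' t| ≤ C) :
    ∃ l, Tendsto f (𝓝[>] a) (𝓝 l) := by
  obtain ⟨b, hab, hb⟩ := mem_nhdsGT_iff_exists_Ioo_subset.1 hf
  have hlip : LipschitzOnWith C.toNNReal f (Ioo a b) :=
    (convex_Ioo a b).lipschitzOnWith_of_nnnorm_hasDerivWithin_le
      (fun t ht => (hb ht).1.hasDerivWithinAt)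
      (fun t ht => by
        rw [← NNReal.coe_le_coe, coe_nnnorm, Real.norm_eq_abs]
        exact (hb ht).2.trans (Real.le_coe_toNNReal C))
  obtain ⟨g, hg, hfg⟩ := hlip.extend_real
  refine ⟨g a, (hg.continuous.tendsto a).mono_left nhdsWithin_le_nhds |>.congr' ?_⟩
  filter_upwards [Ioo_mem_nhdsGT hab] with t ht
  exact (hfg ht).symm

theorem tendsto_atBot_of_rpow_le_deriv {y y' : ℝ → ℝ} {a k : ℝ} (ha : 1 < a) (hk : 0 < k)
    (hy : ∀ᶠ t in 𝓝[>] 0, HasDerivAt y (y' t) t ∧ k * t ^ (-a) ≤ y' t) :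
    Tendsto y (𝓝[>] 0) atBot := by
  set ψ : ℝ → ℝ := fun t => k / (1 - a) * t ^ (1 - a)
  have hψ : ∀ t, 0 < t → HasDerivAt ψ (k * t ^ (-a)) t := fun t ht => by
    refine ((Real.hasDerivAt_rpow_const (p := 1 - a) (Or.inl ht.ne')).const_mul
      (k / (1 - a))).congr_deriv ?_
    rw [sub_sub_cancel_left]
    field_simp [show 1 - a ≠ 0 by linarith]
  obtain ⟨b, hb, hmono⟩ := exists_monotoneOn_Ioo_of_deriv_nonneg (φ := fun t => y t - ψ t)
    (φ' := fun t => y' t - k * t ^ (-a)) (by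
      filter_upwards [hy, self_mem_nhdsWithin] with t ht ht0
      exact ⟨ht.1.sub (hψ t ht0), sub_nonneg.2 ht.2⟩)
  have hψ_bot : Tendsto ψ (𝓝[>] 0) atBot :=
    (tendsto_rpow_neg_nhdsGT_zero (by linarith : 1 - a < 0)).const_mul_atTop_of_neg
      (div_neg_of_pos_of_neg hk (by linarith))
  refine tendsto_atBot_mono' _ ?_ (tendsto_atBot_add_const_left _ (y (b / 2) - ψ (b / 2)) hψ_bot)
  filter_upwards [Ioo_mem_nhdsGT (half_pos hb)] with t ht
  have := hmono ⟨ht.1, ht.2.trans (half_lt_self hb)⟩ ⟨half_pos hb, half_lt_self hb⟩ ht.2.le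
  linarith

theorem tendsto_rpow_nhdsGT_zero_nhds_zero {a : ℝ} (ha : 0 < a) :
    Tendsto (fun t : ℝ => t ^ a) (𝓝[>] 0) (𝓝 0) := by
  simpa [Real.zero_rpow ha.ne'] using
    (Real.continuousAt_rpow_const 0 a (Or.inr ha.le)).tendsto.mono_left nhdsWithin_le_nhds

theorem tendsto_nhds_zero_of_tendsto_div {f : ℝ → ℝ} {L : ℝ}
    (h : Tendsto (fun t => f t / t) (𝓝[>] 0) (𝓝 L)) : Tendsto f (𝓝[>] 0) (𝓝 0) := by
  refine (by simpa using h.mul (tendsto_id.mono_left nhdsWithin_le_nhds) :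
    Tendsto (fun t => f t / t * t) _ _).congr' ?_
  filter_upwards [self_mem_nhdsWithin] with t (ht : 0 < t)
  exact div_mul_cancel₀ _ ht.ne'

theorem contDiffOn_two_of_hasDerivWithinAt {f f₁ f₂ : ℝ → ℝ} {s : Set ℝ}
    (hs : UniqueDiffOn ℝ s) (hf : ∀ t ∈ s, HasDerivWithinAt f (f₁ t) s t)
    (hf₁ : ∀ t ∈ s, HasDerivWithinAt f₁ (f₂ t) s t) (hf₂ : ContinuousOn f₂ s) :
    ContDiffOn ℝ 2 f s := by
  rw [show (2 : WithTop ℕ∞) = 0 + 1 + 1 from rfl, contDiffOn_succ_iff_derivWithin hs]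
  refine ⟨fun t ht => (hf t ht).differentiableWithinAt, by simp, ?_⟩
  refine ContDiffOn.congr ?_ fun t ht => (hf t ht).derivWithin (hs t ht)
  rw [contDiffOn_succ_iff_derivWithin hs]
  refine ⟨fun t ht => (hf₁ t ht).differentiableWithinAt, by simp, ?_⟩
  exact contDiffOn_zero.2 (hf₂.congr fun t ht => (hf₁ t ht).derivWithin (hs t ht))

theorem hasDerivWithinAt_update_of_tendsto {f f' : ℝ → ℝ} {a b y₀ y₁ : ℝ}
    (hab : a < b) (hf : ∀ t ∈ Ioo a b, HasDerivAt f (f' t) t) (h₀ : Tendsto f (𝓝[>] a) (𝓝 y₀))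
    (h₁ : Tendsto f' (𝓝[>] a) (𝓝 y₁)) {t : ℝ} (ht : t ∈ Ico a b) :
    HasDerivWithinAt (update f a y₀) (update f' a y₁ t) (Ico a b) t := by
  rcases eq_or_lt_of_le ht.1 with rfl | hat
  · rw [update_self, hasDerivWithinAt_iff_tendsto_slope, Ico_sdiff_left,
      nhdsWithin_Ioo_eq_nhdsGT hab]
    have := HasDerivAt.lhopital_zero_nhdsGT (f := fun s => f s - y₀) (g := fun s => s - a)
      (f' := f') (g' := fun _ => 1)
      (by filter_upwards [Ioo_mem_nhdsGT hab] with s hs using (hf s hs).sub_const y₀)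
      (.of_forall fun s => (hasDerivAt_id s).sub_const a) (.of_forall fun _ => one_ne_zero)
      (by simpa using h₀.sub_const y₀)
      (by simpa using ((continuous_sub_right a).tendsto a).mono_left nhdsWithin_le_nhds)
      (by simpa using h₁)
    refine this.congr' ?_
    filter_upwards [self_mem_nhdsWithin] with s hs
    rw [slope_def_field, update_self, update_of_ne (ne_of_gt hs)]
  · rw [update_of_ne hat.ne']
    refine ((hf t ⟨hat, ht.2⟩).congr_of_eventuallyEq ?_).hasDerivWithinAt
    filter_upwards [eventually_ne_nhds hat.ne'] with s hs using update_of_ne hs _ _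

theorem contDiffOn_two_update_of_tendsto {f f₁ f₂ : ℝ → ℝ} {a b y₀ y₁ y₂ : ℝ}
    (hab : a < b) (hf : ∀ t ∈ Ioo a b, HasDerivAt f (f₁ t) t)
    (hf₁ : ∀ t ∈ Ioo a b, HasDerivAt f₁ (f₂ t) t) (hf₂ : ContinuousOn f₂ (Ioo a b))
    (h₀ : Tendsto f (𝓝[>] a) (𝓝 y₀)) (h₁ : Tendsto f₁ (𝓝[>] a) (𝓝 y₁))
    (h₂ : Tendsto f₂ (𝓝[>] a) (𝓝 y₂)) :
    ContDiffOn ℝ 2 (update f a y₀) (Ico a b) ∧ derivWithin (update f a y₀) (Ico a b) a = y₁ := by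
  have hs : UniqueDiffOn ℝ (Ico a b) := uniqueDiffOn_Ico a b
  have hg := fun t ht => hasDerivWithinAt_update_of_tendsto hab hf h₀ h₁ (t := t) ht
  have hg₁ := fun t ht => hasDerivWithinAt_update_of_tendsto hab hf₁ h₁ h₂ (t := t) ht
  have hg₂ : ContinuousOn (update f₂ a y₂) (Ico a b) := by
    rw [continuousOn_update_iff, Ico_sdiff_left, nhdsWithin_Ioo_eq_nhdsGT hab]
    exact ⟨hf₂, fun _ => h₂⟩
  refine ⟨contDiffOn_two_of_hasDerivWithinAt hs hg hg₁ hg₂, ?_⟩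
  have := (hg a (left_mem_Ico.2 hab)).derivWithin (hs a (left_mem_Ico.2 hab))
  rwa [update_self] at this

theorem continuousOn_update_slope {𝕜 E : Type*} [NontriviallyNormedField 𝕜]
    [NormedAddCommGroup E] [NormedSpace 𝕜 E] [DecidableEq 𝕜] {f : 𝕜 → E} {s : Set 𝕜} {a : 𝕜}
    (hf : ContinuousOn f s) (ha : DifferentiableWithinAt 𝕜 f s a) :
    ContinuousOn (update (slope f a) a (derivWithin f s a)) s := by
  refine continuousOn_update_iff.2 ⟨fun t ht => ?_, fun _ =>
    hasDerivWithinAt_iff_tendsto_slope.1 ha.hasDerivWithinAt⟩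
  simp only [slope_fun_def]
  exact ((continuousWithinAt_id.sub continuousWithinAt_const).inv₀
    (sub_ne_zero.2 ht.2)).smul (((hf t ht.1).mono sdiff_subset).vsub continuousWithinAt_const)

theorem exists_integratingFactor {A : ℝ → ℝ} {b : ℝ} (hb : 0 < b)
    (hA : ContinuousOn A (Ico 0 b)) (hA0 : DifferentiableWithinAt ℝ A (Ico 0 b) 0) :
    ∃ w : ℝ → ℝ, (∀ t ∈ Ioo 0 b, 0 < w t ∧ HasDerivAt w (w t * A t / t) t) ∧
      w =O[𝓝[>] 0] fun t => t ^ A 0 := by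
  set R := update (slope A 0) 0 (derivWithin A (Ico 0 b) 0)
  have hR : ContinuousOn R (Ico 0 b) := continuousOn_update_slope hA hA0
  have hRint : ∀ t ∈ Ico 0 b, IntervalIntegrable R volume 0 t := fun t ht =>
    (hR.mono fun s hs => by
      rw [uIcc_of_le ht.1] at hs; exact ⟨hs.1, hs.2.trans_lt ht.2⟩).intervalIntegrable
  set I : ℝ → ℝ := fun t => ∫ s in (0)..t, R s
  have hE : Tendsto (fun t => Real.exp (I t)) (𝓝[>] 0) (𝓝 1) := by
    have hb2 : b / 2 ∈ Ico 0 b := ⟨by positivity, half_lt_self hb⟩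
    have hI : ContinuousWithinAt I (Icc 0 (b / 2)) 0 := by
      have := intervalIntegral.continuousOn_primitive_interval' (hRint _ hb2) left_mem_uIcc
      rw [uIcc_of_le hb2.1] at this
      exact this 0 (left_mem_Icc.2 hb2.1)
    have := (Real.continuous_exp.continuousAt.comp_continuousWithinAt hI).mono_of_mem_nhdsWithin
      (Icc_mem_nhdsGT (half_pos hb))
    simpa [I, comp_def] using this.tendsto
  refine ⟨fun t => t ^ A 0 * Real.exp (I t), fun t ht => ⟨by have := ht.1; positivity, ?_⟩,
    by simpa using (isBigO_refl (fun t : ℝ => t ^ A 0) _).mul (hE.isBigO_one ℝ)⟩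
  have hI : HasDerivAt I (R t) t :=
    intervalIntegral.integral_hasDerivAt_right (hRint t (Ioo_subset_Ico_self ht))
      ((hR.mono Ioo_subset_Ico_self).stronglyMeasurableAtFilter isOpen_Ioo t ht)
      (hR.continuousAt (Ico_mem_nhds ht.1 ht.2))
  refine ((Real.hasDerivAt_rpow_const (p := A 0) (Or.inl ht.1.ne')).mul hI.exp).congr_deriv ?_
  simp only [R, update_of_ne ht.1.ne', slope_def_field, sub_zero, Real.rpow_sub_one ht.1.ne']
  field_simp
  ring

theorem eq_zero_of_tendsto_mul_deriv {x x' w : ℝ → ℝ} {a c C : ℝ} (ha : 1 < a)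
    (hx : ∀ᶠ t in 𝓝[>] 0, HasDerivAt x (x' t) t ∧ |x t| ≤ C)
    (hw : ∀ᶠ t in 𝓝[>] 0, 0 < w t) (hwO : w =O[𝓝[>] 0] fun t => t ^ a)
    (hc : Tendsto (fun t => w t * x' t) (𝓝[>] 0) (𝓝 c)) : c = 0 := by
  by_contra hc0
  obtain ⟨K, hK⟩ := hwO.bound
  set K' := max K 1
  have hy : Tendsto (fun t => c * x t) (𝓝[>] 0) atBot := by
    refine tendsto_atBot_of_rpow_le_deriv (y' := fun t => c * x' t) ha
      (by positivity : 0 < c ^ 2 / 2 / K') ?_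
    have hlt : ∀ᶠ t in 𝓝[>] 0, c ^ 2 / 2 < c * (w t * x' t) :=
      (hc.const_mul c).eventually (lt_mem_nhds (by nlinarith [sq_pos_of_ne_zero hc0]))
    filter_upwards [hx, hw, hK, hlt, self_mem_nhdsWithin] with t hxt hwt hKt hlt (ht : 0 < t)
    refine ⟨hxt.1.const_mul c, ?_⟩
    have hta : 0 ≤ t ^ a := Real.rpow_nonneg ht.le a
    rw [Real.norm_of_nonneg hwt.le, Real.norm_of_nonneg hta] at hKt
    have hwK : w t ≤ K' * t ^ a := hKt.trans (mul_le_mul_of_nonneg_right (le_max_left _ _) hta)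
    calc c ^ 2 / 2 / K' * t ^ (-a) = c ^ 2 / 2 / (K' * t ^ a) := by
          rw [Real.rpow_neg ht.le]; field_simp
      _ ≤ c ^ 2 / 2 / w t := div_le_div_of_nonneg_left (by positivity) hwt hwK
      _ ≤ c * x' t := by rw [div_le_iff₀ hwt]; linarith
  obtain ⟨t, ht₁, ht₂⟩ := ((hy.eventually_lt_atBot (-(|c| * C))).and hx).exists
  have := neg_abs_le (c * x t)
  rw [abs_mul] at this
  nlinarith [abs_nonneg c, ht₂.2]

theorem tendsto_mul_deriv_nhdsGT_zero {x x' w H' : ℝ → ℝ} {a C M : ℝ} (ha : 1 < a)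
    (hx : ∀ᶠ t in 𝓝[>] 0, HasDerivAt x (x' t) t ∧ |x t| ≤ C)
    (hw : ∀ᶠ t in 𝓝[>] 0, 0 < w t) (hwO : w =O[𝓝[>] 0] fun t => t ^ a)
    (hH : ∀ᶠ t in 𝓝[>] 0, HasDerivAt (fun s => w s * x' s) (H' t) t ∧ |H' t| ≤ M * w t) :
    Tendsto (fun t => w t * x' t) (𝓝[>] 0) (𝓝 0) := by
  have hw1 : ∀ᶠ t in 𝓝[>] 0, w t < 1 :=
    (hwO.trans_tendsto (tendsto_rpow_nhdsGT_zero_nhds_zero (by linarith))).eventually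
      (gt_mem_nhds one_pos)
  obtain ⟨c, hc⟩ := exists_tendsto_of_abs_deriv_le (C := |M|) (by
    filter_upwards [hH, hw, hw1] with t hHt hwt hw1t
    exact ⟨hHt.1, hHt.2.trans (by nlinarith [le_abs_self M, abs_nonneg M])⟩)
  rwa [eq_zero_of_tendsto_mul_deriv ha hx hw hwO hc] at hc

theorem hasDerivAt_mul_deriv_of_ode {A Q x x' w : ℝ → ℝ} {t : ℝ} (ht : t ≠ 0)
    (hw : HasDerivAt w (w t * A t / t) t)
    (hx' : HasDerivAt x' (-(t * A t * x' t + t ^ 2 * Q t * x t) / t ^ 2) t) :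
    HasDerivAt (fun s => w s * x' s) (-(w t * (Q t * x t))) t :=
  (hw.mul hx').congr_deriv (by field_simp; ring)

theorem hasDerivAt_id_mul_integratingFactor {A w : ℝ → ℝ} {t : ℝ} (ht : t ≠ 0)
    (hw : HasDerivAt w (w t * A t / t) t) :
    HasDerivAt (fun s => s * w s) (w t * (1 + A t)) t :=
  ((hasDerivAt_id t).mul hw).congr_deriv (by simp only [id]; field_simp)

theorem eventually_abs_deriv_le_of_tendsto {A x' w H' : ℝ → ℝ} {M : ℝ} (hM : 0 ≤ M)
    (hw : ∀ᶠ t in 𝓝[>] 0, 0 < w t ∧ 0 ≤ A t ∧ HasDerivAt w (w t * A t / t) t)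
    (hw0 : Tendsto w (𝓝[>] 0) (𝓝 0))
    (hH : ∀ᶠ t in 𝓝[>] 0, HasDerivAt (fun s => w s * x' s) (H' t) t ∧ |H' t| ≤ M * w t)
    (hH0 : Tendsto (fun t => w t * x' t) (𝓝[>] 0) (𝓝 0)) :
    ∀ᶠ t in 𝓝[>] 0, |x' t| ≤ M * t := by
  have hHle := eventually_abs_le_of_abs_deriv_le (hH.mono fun t h => h.1)
    (g := fun t => M * (t * w t)) (g' := fun t => M * (w t * (1 + A t)))
    (by filter_upwards [hw, self_mem_nhdsWithin] with t hwt (ht : 0 < t)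
        exact (hasDerivAt_id_mul_integratingFactor ht.ne' hwt.2.2).const_mul M)
    (by filter_upwards [hH, hw] with t hHt hwt
        nlinarith [mul_nonneg (mul_nonneg hM hwt.1.le) hwt.2.1])
    hH0 (by simpa using ((tendsto_id.mono_left nhdsWithin_le_nhds).mul hw0).const_mul M)
  filter_upwards [hHle, hw] with t hHt hwt
  rw [abs_mul, abs_of_pos hwt.1] at hHt
  exact le_of_mul_le_mul_left (by linarith) hwt.1

theorem tendsto_deriv_div_of_ode {A Q x x' w : ℝ → ℝ} {a p : ℝ} (ha : 1 + a ≠ 0)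
    (hA : Tendsto A (𝓝[>] 0) (𝓝 a)) (hQx : Tendsto (fun t => Q t * x t) (𝓝[>] 0) (𝓝 p))
    (hw : ∀ᶠ t in 𝓝[>] 0, 0 < w t ∧ HasDerivAt w (w t * A t / t) t)
    (hw0 : Tendsto w (𝓝[>] 0) (𝓝 0))
    (hx' : ∀ᶠ t in 𝓝[>] 0, HasDerivAt x' (-(t * A t * x' t + t ^ 2 * Q t * x t) / t ^ 2) t)
    (hH0 : Tendsto (fun t => w t * x' t) (𝓝[>] 0) (𝓝 0)) :
    Tendsto (fun t => x' t / t) (𝓝[>] 0) (𝓝 (-p / (1 + a))) := by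
  have hA1 : ∀ᶠ t in 𝓝[>] 0, 1 + A t ≠ 0 :=
    (tendsto_const_nhds.add hA).eventually_ne ha
  have hdiv : Tendsto (fun t => -(w t * (Q t * x t)) / (w t * (1 + A t))) (𝓝[>] 0)
      (𝓝 (-p / (1 + a))) := by
    refine (hQx.neg.div (tendsto_const_nhds.add hA) ha).congr' ?_
    filter_upwards [hw] with t hwt
    simp only [Pi.div_apply, neg_div, mul_div_mul_left _ _ hwt.1.ne']
  refine (HasDerivAt.lhopital_zero_nhdsGT ?_ ?_ ?_ hH0
    (by simpa using (tendsto_id.mono_left nhdsWithin_le_nhds).mul hw0) hdiv).congr' ?_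
  · filter_upwards [hw, hx', self_mem_nhdsWithin] with t hwt hx't (ht : 0 < t)
    exact hasDerivAt_mul_deriv_of_ode ht.ne' hwt.2 hx't
  · filter_upwards [hw, self_mem_nhdsWithin] with t hwt (ht : 0 < t)
    exact hasDerivAt_id_mul_integratingFactor ht.ne' hwt.2
  · filter_upwards [hw, hA1] with t hwt hAt
    exact mul_ne_zero hwt.1.ne' hAt
  · filter_upwards [hw] with t hwt
    rw [mul_comm t, mul_div_mul_left _ _ hwt.1.ne']

theorem tendsto_ode_rhs {A Q x x' : ℝ → ℝ} {a q x₀ : ℝ} (ha : 1 + a ≠ 0)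
    (hA : Tendsto A (𝓝[>] 0) (𝓝 a)) (hQ : Tendsto Q (𝓝[>] 0) (𝓝 q))
    (hx : Tendsto x (𝓝[>] 0) (𝓝 x₀))
    (hslope : Tendsto (fun t => x' t / t) (𝓝[>] 0) (𝓝 (-(q * x₀) / (1 + a)))) :
    Tendsto (fun t => -(t * A t * x' t + t ^ 2 * Q t * x t) / t ^ 2) (𝓝[>] 0)
      (𝓝 (-(q * x₀) / (1 + a))) := by
  have hL : -(a * (-(q * x₀) / (1 + a)) + q * x₀) = -(q * x₀) / (1 + a) := by
    field_simp; ring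
  rw [← hL]
  refine ((hA.mul hslope).add (hQ.mul hx)).neg.congr' ?_
  filter_upwards [self_mem_nhdsWithin] with t (ht : 0 < t)
  field_simp

theorem exists_tendsto_of_ode {A Q x x' w : ℝ → ℝ} {a q C : ℝ} (ha : 1 < a)
    (hA : Tendsto A (𝓝[>] 0) (𝓝 a)) (hQ : Tendsto Q (𝓝[>] 0) (𝓝 q))
    (hw : ∀ᶠ t in 𝓝[>] 0, 0 < w t ∧ HasDerivAt w (w t * A t / t) t)
    (hwO : w =O[𝓝[>] 0] fun t => t ^ a)
    (hx : ∀ᶠ t in 𝓝[>] 0, |x t| ≤ C ∧ HasDerivAt x (x' t) t ∧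
      HasDerivAt x' (-(t * A t * x' t + t ^ 2 * Q t * x t) / t ^ 2) t) :
    ∃ x₀, Tendsto x (𝓝[>] 0) (𝓝 x₀) ∧
      Tendsto (fun t => x' t / t) (𝓝[>] 0) (𝓝 (-(q * x₀) / (1 + a))) := by
  have hw0 := hwO.trans_tendsto (tendsto_rpow_nhdsGT_zero_nhds_zero (by linarith))
  set M := (|q| + 1) * |C|
  have hH : ∀ᶠ t in 𝓝[>] 0, HasDerivAt (fun s => w s * x' s) (-(w t * (Q t * x t))) t ∧
      |-(w t * (Q t * x t))| ≤ M * w t := by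
    filter_upwards [hw, hx, hQ.abs.eventually (gt_mem_nhds (lt_add_one |q|)),
      self_mem_nhdsWithin] with t hwt hxt hQt (ht : 0 < t)
    refine ⟨hasDerivAt_mul_deriv_of_ode ht.ne' hwt.2 hxt.2.2, ?_⟩
    rw [abs_neg, abs_mul, abs_mul, abs_of_pos hwt.1, mul_comm M]
    exact mul_le_mul_of_nonneg_left (mul_le_mul hQt.le (hxt.1.trans (le_abs_self C))
      (abs_nonneg _) (by positivity)) hwt.1.le
  have hH0 := tendsto_mul_deriv_nhdsGT_zero ha (hx.mono fun t h => ⟨h.2.1, h.1⟩)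
    (hw.mono fun t h => h.1) hwO hH
  have hx'le := eventually_abs_deriv_le_of_tendsto (by positivity)
    (by filter_upwards [hw, hA.eventually (le_mem_nhds (by linarith : (0 : ℝ) < a))]
          with t hwt hAt using ⟨hwt.1, hAt, hwt.2⟩) hw0 hH hH0
  obtain ⟨x₀, hx₀⟩ := exists_tendsto_of_abs_deriv_le (C := M) (by
    filter_upwards [hx, hx'le, self_mem_nhdsWithin, Ioo_mem_nhdsGT one_pos]
      with t hxt hx't (ht : 0 < t) ht1
    exact ⟨hxt.2.1, hx't.trans (mul_le_of_le_one_right (by positivity) ht1.2.le)⟩)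
  exact ⟨x₀, hx₀, tendsto_deriv_div_of_ode (by linarith) hA (hQ.mul hx₀) hw hw0
    (hx.mono fun t h => h.2.2) hH0⟩

theorem bounded_solution_C2_extension_general
    (t0 : ℝ) (ht0 : 0 < t0) (A Q : ℝ → ℝ)
    (hA : ContDiffOn ℝ 1 A (Set.Ico 0 t0)) (hQ : ContDiffOn ℝ 1 Q (Set.Ico 0 t0))
    (ha0 : 1 < A 0)
    (x x' : ℝ → ℝ)
    (hsol : IsODESol A (fun t => t ^ 2 * Q t) t0 x x')
    (hbdd : ∃ C : ℝ, ∀ t ∈ Set.Ioo 0 t0, |x t| ≤ C) :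
    ∃ g : ℝ → ℝ, ContDiffOn ℝ 2 g (Set.Ico 0 t0) ∧
      (∀ t ∈ Set.Ioo 0 t0, g t = x t) ∧
      derivWithin g (Set.Ico 0 t0) 0 = 0 := by
  obtain ⟨hx, hx'⟩ := hsol
  obtain ⟨C, hC⟩ := hbdd
  have hlim {f : ℝ → ℝ} (hf : ContinuousOn f (Ico 0 t0)) : Tendsto f (𝓝[>] 0) (𝓝 (f 0)) := by
    simpa [nhdsWithin_Ioo_eq_nhdsGT ht0] using
      ((hf 0 (left_mem_Ico.2 ht0)).mono Ioo_subset_Ico_self).tendsto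
  obtain ⟨w, hw, hwO⟩ := exists_integratingFactor ht0 hA.continuousOn
    (hA.differentiableOn one_ne_zero 0 (left_mem_Ico.2 ht0))
  obtain ⟨x₀, hx₀, hslope⟩ := exists_tendsto_of_ode ha0 (hlim hA.continuousOn)
    (hlim hQ.continuousOn) (mem_of_superset (Ioo_mem_nhdsGT ht0) hw) hwO
    (mem_of_superset (Ioo_mem_nhdsGT ht0) fun t ht => ⟨hC t ht, hx t ht, hx' t ht⟩)
  have hrhs : ContinuousOn (fun t => -(t * A t * x' t + t ^ 2 * Q t * x t) / t ^ 2)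
      (Ioo 0 t0) := by
    have := hA.continuousOn.mono Ioo_subset_Ico_self
    have := hQ.continuousOn.mono Ioo_subset_Ico_self
    have : ContinuousOn x (Ioo 0 t0) := fun t ht => (hx t ht).continuousAt.continuousWithinAt
    have : ContinuousOn x' (Ioo 0 t0) := fun t ht => (hx' t ht).continuousAt.continuousWithinAt
    exact ContinuousOn.div (by fun_prop) (by fun_prop) fun t ht => pow_ne_zero 2 ht.1.ne'
  obtain ⟨hg, hg₀⟩ := contDiffOn_two_update_of_tendsto ht0 hx hx' hrhs hx₀
    (tendsto_nhds_zero_of_tendsto_div hslope)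
    (tendsto_ode_rhs (by linarith) (hlim hA.continuousOn) (hlim hQ.continuousOn) hx₀ hslope)
  exact ⟨update x 0 x₀, hg, fun t ht => update_of_ne ht.1.ne' _ _, hg₀⟩

theorem bounded_solution_C2_extension
    (t0 : ℝ) (ht0 : 0 < t0) (A Q : ℝ → ℝ)
    (hA : ContDiffOn ℝ 1 A (Set.Ico 0 t0)) (hQ : ContDiffOn ℝ 1 Q (Set.Ico 0 t0))
    (ha0 : 1 < A 0) (hQ0 : Q 0 ≠ 0)
    (x x' : ℝ → ℝ)
    (hsol : IsODESol A (fun t => t ^ 2 * Q t) t0 x x')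
    (hbdd : ∃ C : ℝ, ∀ t ∈ Set.Ioo 0 t0, |x t| ≤ C) :
    ∃ g : ℝ → ℝ, ContDiffOn ℝ 2 g (Set.Ico 0 t0) ∧
      (∀ t ∈ Set.Ioo 0 t0, g t = x t) ∧
      derivWithin g (Set.Ico 0 t0) 0 = 0 :=
  bounded_solution_C2_extension_general t0 ht0 A Q hA hQ ha0 x x' hsol hbdd
end
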